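/- arXiv:1602.03795 — 9 statements merged into one kernel-verified Lean document; each statement's English description precedes it below -/
import Mathlib

section
/- Let $\psi_k : Y \to (0,\infty)$, $k \in \mathbb{N}$, be a countable family of functions on a metric space $(Y,d)$, with $\eta \in (0,1]$, such that the sum $\sum_k \psi_k$ is finite everywhere. Then $\sup_{x\ne y} \frac{|\log \sum_k \psi_k(x) - \log \sum_k \psi_k(y)|}{d(x,y)^\eta} \le \sup_k \sup_{x\ne y} \frac{|\log \psi_k(x) - \log \psi_k(y)|}{d(x,y)^\eta}$. -/
/-- If each `ψ k : Y → (0,∞)` has log-Hölder constant at most `H` (with exponent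
`η ∈ (0,1]`) and `∑ k, ψ k` converges everywhere, then the sum also has
log-Hölder constant at most `H`; i.e. `|∑ₖ ψₖ|_{η,ℓ} ≤ supₖ |ψₖ|_{η,ℓ}`. -/
theorem log_holder_tsum {Y : Type*} [MetricSpace Y]
    (η : ℝ) (hη : η ∈ Set.Ioc (0:ℝ) 1)
    (ψ : ℕ → Y → ℝ) (hpos : ∀ k x, 0 < ψ k x)
    (hsum : ∀ x, Summable fun k => ψ k x)
    (H : ℝ) (hH : 0 ≤ H)
    (hk : ∀ k (x y : Y), |Real.log (ψ k x) - Real.log (ψ k y)| ≤ H * dist x y ^ η) :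
    ∀ x y : Y, |Real.log (∑' k, ψ k x) - Real.log (∑' k, ψ k y)| ≤ H * dist x y ^ η := by
  have key : ∀ x y : Y,
      Real.log (∑' k, ψ k x) - Real.log (∑' k, ψ k y) ≤ H * dist x y ^ η := by
    intro x y
    set C := H * dist x y ^ η with hC
    have hC0 : 0 ≤ C := mul_nonneg hH (Real.rpow_nonneg dist_nonneg η)
    have hle : ∀ k, ψ k x ≤ Real.exp C * ψ k y := by
      intro k
      have h1 : Real.log (ψ k x) - Real.log (ψ k y) ≤ C :=
        le_trans (le_abs_self _) (hk k x y)
      have h2 : Real.log (ψ k x) ≤ C + Real.log (ψ k y) := by linarith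
      calc ψ k x = Real.exp (Real.log (ψ k x)) := (Real.exp_log (hpos k x)).symm
        _ ≤ Real.exp (C + Real.log (ψ k y)) := Real.exp_le_exp.mpr h2
        _ = Real.exp C * ψ k y := by rw [Real.exp_add, Real.exp_log (hpos k y)]
    have hsumle : (∑' k, ψ k x) ≤ Real.exp C * ∑' k, ψ k y := by
      rw [← tsum_mul_left]
      exact Summable.tsum_le_tsum hle (hsum x) ((hsum y).mul_left _)
    have hposx : 0 < ∑' k, ψ k x := Summable.tsum_pos (hsum x) (fun k => (hpos k x).le) 0 (hpos 0 x)
    have hposy : 0 < ∑' k, ψ k y := Summable.tsum_pos (hsum y) (fun k => (hpos k y).le) 0 (hpos 0 y)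
    have := Real.log_le_log hposx hsumle
    rw [Real.log_mul (Real.exp_ne_zero C) hposy.ne', Real.log_exp] at this
    linarith
  intro x y
  rw [abs_sub_le_iff]
  refine ⟨key x y, ?_⟩
  have := key y x
  rwa [dist_comm] at this
end

section
/- Let $\psi : Y \to (0,\infty)$ be integrable on a probability space $(Y,m)$ with metric $d$, $\eta \in (0,1]$, and suppose $|\log\psi(x)-\log\psi(y)| \le L\, d(x,y)^\eta$ for all $x,y$, where $L = |\psi|_{\eta,\ell}$. Then for every $t \in [0, e^{-L})$, the function $\psi - t\int_Y \psi\,dm$ is strictly positive and satisfies $\bigl|\log(\psi(x) - t\int\psi\,dm) - \log(\psi(y) - t\int\psi\,dm)\bigr| \le \frac{L}{1 - t e^{L}}\, d(x,y)^\eta$ for all $x,y \in Y$. -/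
/-!
Write `c = t ∫ ψ dm` and `θ = t e^L < 1`. Since `d ≤ 1`, the log-Hölder bound gives
`ψ x ≤ e^L ψ y` for all `x, y`, hence `∫ ψ dm ≤ e^L ψ x` and `c ≤ θ ψ x` everywhere.
For `b ≤ a` and `c ≤ θ b`, the ratio `(a - c)/(b - c)` is at most its value at `c = θ b`,
namely `1 + (a/b - 1)/(1 - θ)`, which Bernoulli's inequality bounds by `(a/b)^(1/(1 - θ))`.
Taking logarithms, subtracting `c` multiplies log-differences by at most `1/(1 - θ)`.
-/

open MeasureTheory Real

section LogSubConst

variable {θ a b c : ℝ}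

lemma div_sub_sub_le_one_add (hθ1 : θ < 1) (hb : 0 < b) (hba : b ≤ a) (hcb : c ≤ θ * b) :
    (a - c) / (b - c) ≤ 1 + (1 - θ)⁻¹ * (a / b - 1) := by
  have hθ : 0 < 1 - θ := sub_pos.2 hθ1
  have hbc : 0 < b - c := by nlinarith
  rw [div_le_iff₀ hbc, inv_mul_eq_div, div_sub_one hb.ne', div_div,
    ← sub_nonneg]
  have hexpand : (1 + (a - b) / (b * (1 - θ))) * (b - c) - (a - c)
      = (θ * b - c) * (a - b) / (b * (1 - θ)) := by
    field_simp
    ring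
  rw [hexpand]
  exact div_nonneg (mul_nonneg (by linarith) (by linarith)) (mul_pos hb hθ).le

lemma log_sub_sub_le_div (hθ0 : 0 ≤ θ) (hθ1 : θ < 1) (hb : 0 < b) (hba : b ≤ a)
    (hcb : c ≤ θ * b) :
    log (a - c) - log (b - c) ≤ (log a - log b) / (1 - θ) := by
  have hθ : 0 < 1 - θ := sub_pos.2 hθ1
  have hbc : 0 < b - c := by nlinarith
  have hab : 0 < a / b := div_pos (hb.trans_le hba) hb
  have bernoulli : 1 + (1 - θ)⁻¹ * (a / b - 1) ≤ (a / b) ^ (1 - θ)⁻¹ := by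
    simpa using one_add_mul_self_le_rpow_one_add (s := a / b - 1) (by linarith)
      (one_le_inv₀ hθ |>.2 (by linarith))
  calc log (a - c) - log (b - c) = log ((a - c) / (b - c)) :=
        (log_div (by linarith) hbc.ne').symm
    _ ≤ log ((a / b) ^ (1 - θ)⁻¹) :=
        log_le_log (div_pos (by linarith) hbc)
          ((div_sub_sub_le_one_add hθ1 hb hba hcb).trans bernoulli)
    _ = (log a - log b) / (1 - θ) := by
        rw [log_rpow hab, log_div (hb.trans_le hba).ne' hb.ne', inv_mul_eq_div]

lemma abs_log_sub_sub_le_div (hθ0 : 0 ≤ θ) (hθ1 : θ < 1) (ha : 0 < a) (hb : 0 < b)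
    (hca : c ≤ θ * a) (hcb : c ≤ θ * b) :
    |log (a - c) - log (b - c)| ≤ |log a - log b| / (1 - θ) := by
  wlog hba : b ≤ a generalizing a b
  · rw [abs_sub_comm, abs_sub_comm (log a)]
    exact this hb ha hcb hca (le_of_not_ge hba)
  have hbc : 0 < b - c := by nlinarith
  rw [abs_of_nonneg (sub_nonneg.2 (log_le_log hbc (by linarith))),
    abs_of_nonneg (sub_nonneg.2 (log_le_log hb hba))]
  exact log_sub_sub_le_div hθ0 hθ1 hb hba hcb

end LogSubConst

lemma le_exp_mul_of_abs_log_sub_le {u v L : ℝ} (hu : 0 < u) (hv : 0 < v)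
    (h : |log u - log v| ≤ L) : u ≤ exp L * v := by
  rw [← log_le_log_iff hu (by positivity), log_mul (exp_pos L).ne' hv.ne', log_exp]
  linarith [le_abs_self (log u - log v)]

/-- If `ψ : Y → (0,∞)` is integrable on a metric probability space with log-Hölder
constant `L`, then for each `t ∈ [0, e^{-L})` the function `ψ - t ∫ ψ dm` is strictly
positive and has log-Hölder constant at most `L / (1 - t e^L)`. -/
theorem log_holder_sub_const {Y : Type*} [MetricSpace Y] [MeasurableSpace Y]
    (m : Measure Y) [IsProbabilityMeasure m]
    (hdiam : ∀ x y : Y, dist x y ≤ 1)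
    (η L : ℝ) (hη : η ∈ Set.Ioc (0:ℝ) 1) (hL : 0 ≤ L)
    (ψ : Y → ℝ) (hψ : ∀ x, 0 < ψ x) (hint : Integrable ψ m)
    (hlog : ∀ x y : Y, |Real.log (ψ x) - Real.log (ψ y)| ≤ L * dist x y ^ η)
    (t : ℝ) (ht0 : 0 ≤ t) (ht : t < Real.exp (-L)) :
    (∀ x, 0 < ψ x - t * ∫ y, ψ y ∂m) ∧
      ∀ x y : Y,
        |Real.log (ψ x - t * ∫ z, ψ z ∂m) - Real.log (ψ y - t * ∫ z, ψ z ∂m)|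
          ≤ L / (1 - t * Real.exp L) * dist x y ^ η := by
  have hratio (x y : Y) : ψ x ≤ exp L * ψ y :=
    le_exp_mul_of_abs_log_sub_le (hψ x) (hψ y) <| (hlog x y).trans <|
      mul_le_of_le_one_right hL (rpow_le_one dist_nonneg (hdiam x y) hη.1.le)
  have hintegral (x : Y) : ∫ y, ψ y ∂m ≤ exp L * ψ x := by
    simpa using integral_mono hint (integrable_const _) (hratio · x)
  have hθ0 : 0 ≤ t * exp L := by positivity
  have hθ1 : t * exp L < 1 := by
    rwa [exp_neg, ← one_div, lt_div_iff₀ (exp_pos L)] at ht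
  have hc (x : Y) : t * ∫ y, ψ y ∂m ≤ t * exp L * ψ x := by
    rw [mul_assoc]
    exact mul_le_mul_of_nonneg_left (hintegral x) ht0
  refine ⟨fun x => by nlinarith [hc x, hψ x], fun x y => ?_⟩
  calc _ ≤ |log (ψ x) - log (ψ y)| / (1 - t * exp L) :=
        abs_log_sub_sub_le_div hθ0 hθ1 (hψ x) (hψ y) (hc x) (hc y)
    _ ≤ L * dist x y ^ η / (1 - t * exp L) :=
        div_le_div_of_nonneg_right (hlog x y) (by linarith)
    _ = L / (1 - t * exp L) * dist x y ^ η := div_mul_eq_mul_div _ _ _ |>.symm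
end

section
/- Let $F : Y \to Y$ be a measurable map on a probability space $(Y,m)$ with metric $d$ ($\mathrm{diam}\,Y \le 1$), with countable partition $\alpha$ of $Y$ such that $F|_a : a \to Y$ is a bijection for each $a \in \alpha$, inverse Jacobian $\zeta$ satisfying $d(Fx,Fy) \ge \lambda d(x,y)$ and $|\log\zeta(x) - \log\zeta(y)| \le K\, d(Fx,Fy)^\eta$ for $x,y$ in the same partition element, where $\lambda > 1$, $K > 0$, $\eta \in (0,1]$. Then for any $\psi : Y \to (0,\infty)$ with $|\psi|_{\eta,\ell} < \infty$, the transfer operator $P_m\psi(y) = \sum_{a\in\alpha} \zeta(y_a)\psi(y_a)$ (where $y_a = (F|_a)^{-1}y$) satisfies $|P_m\psi|_{\eta,\ell} \le K + \lambda^{-\eta}|\psi|_{\eta,\ell}$. -/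
/-- Distortion estimate for the transfer operator of a full-branch uniformly
expanding map: if `|ψ|_{η,ℓ} ≤ H` then `|P_m ψ|_{η,ℓ} ≤ K + λ^{-η} H`. The transfer
operator is given by `(P_m ψ)(y) = ∑_a ζ(y_a) ψ(y_a)` over the inverse branches. -/
theorem transfer_log_holder {Y : Type*} [MetricSpace Y]
    {ι : Type*} [Countable ι] (A : ι → Set Y)
    (F : Y → Y) (inv : ι → Y → Y)
    (hinv_mem : ∀ i y, inv i y ∈ A i)
    (hinv_right : ∀ i y, F (inv i y) = y)
    (hinv_left : ∀ i, ∀ x ∈ A i, inv i (F x) = x)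
    (ζ : Y → ℝ) (hζ : ∀ x, 0 < ζ x)
    (Λ K η : ℝ) (hΛ : 1 < Λ) (hK : 0 < K) (hη : η ∈ Set.Ioc (0:ℝ) 1)
    (hdiam : ∀ x y : Y, dist x y ≤ 1)
    (hexp : ∀ i, ∀ x ∈ A i, ∀ y ∈ A i, Λ * dist x y ≤ dist (F x) (F y))
    (hdist : ∀ i, ∀ x ∈ A i, ∀ y ∈ A i,
      |Real.log (ζ x) - Real.log (ζ y)| ≤ K * dist (F x) (F y) ^ η)
    (ψ : Y → ℝ) (hψ : ∀ x, 0 < ψ x)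
    (H : ℝ) (hH : 0 ≤ H)
    (hψH : ∀ x y : Y, |Real.log (ψ x) - Real.log (ψ y)| ≤ H * dist x y ^ η)
    (Pψ : Y → ℝ)
    (hP : ∀ y, HasSum (fun i => ζ (inv i y) * ψ (inv i y)) (Pψ y)) :
    ∀ x y : Y, |Real.log (Pψ x) - Real.log (Pψ y)|
      ≤ (K + Λ ^ (-η) * H) * dist x y ^ η := by
  have hΛ0 : (0:ℝ) < Λ := lt_trans one_pos hΛ
  have hΛη : 0 ≤ Λ ^ (-η) := Real.rpow_nonneg hΛ0.le _
  have hCcoef : 0 ≤ K + Λ ^ (-η) * H := by positivity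
  have key : ∀ u v : Y, ∀ i, ζ (inv i u) * ψ (inv i u) ≤
      Real.exp ((K + Λ ^ (-η) * H) * dist u v ^ η) * (ζ (inv i v) * ψ (inv i v)) := by
    intro u v i
    set a := inv i u with ha'
    set b := inv i v with hb'
    have ha : a ∈ A i := hinv_mem i u
    have hb : b ∈ A i := hinv_mem i v
    have hFa : F a = u := hinv_right i u
    have hFb : F b = v := hinv_right i v
    have hd : dist a b ≤ dist u v / Λ := by
      have h := hexp i a ha b hb
      rw [hFa, hFb] at h
      rw [le_div_iff₀ hΛ0]
      linarith
    have hdp : (dist a b) ^ η ≤ Λ ^ (-η) * dist u v ^ η := by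
      calc (dist a b) ^ η ≤ (dist u v / Λ) ^ η :=
            Real.rpow_le_rpow dist_nonneg hd hη.1.le
        _ = Λ ^ (-η) * dist u v ^ η := by
            rw [Real.div_rpow dist_nonneg hΛ0.le, Real.rpow_neg hΛ0.le]
            ring
    have hζd : Real.log (ζ a) - Real.log (ζ b) ≤ K * dist u v ^ η := by
      have h := hdist i a ha b hb
      rw [hFa, hFb] at h
      exact le_trans (le_abs_self _) h
    have hψd : Real.log (ψ a) - Real.log (ψ b) ≤ H * (dist a b) ^ η :=
      le_trans (le_abs_self _) (hψH a b)
    have hmul : H * (dist a b) ^ η ≤ H * (Λ ^ (-η) * dist u v ^ η) :=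
      mul_le_mul_of_nonneg_left hdp hH
    have hlog : Real.log (ζ a * ψ a)
        ≤ (K + Λ ^ (-η) * H) * dist u v ^ η + Real.log (ζ b * ψ b) := by
      rw [Real.log_mul (hζ a).ne' (hψ a).ne', Real.log_mul (hζ b).ne' (hψ b).ne']
      nlinarith
    have h1 : 0 < ζ a * ψ a := mul_pos (hζ a) (hψ a)
    have h2 : 0 < ζ b * ψ b := mul_pos (hζ b) (hψ b)
    calc ζ a * ψ a = Real.exp (Real.log (ζ a * ψ a)) := (Real.exp_log h1).symm
      _ ≤ Real.exp ((K + Λ ^ (-η) * H) * dist u v ^ η + Real.log (ζ b * ψ b)) :=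
          Real.exp_le_exp.mpr hlog
      _ = Real.exp ((K + Λ ^ (-η) * H) * dist u v ^ η) * (ζ b * ψ b) := by
          rw [Real.exp_add, Real.exp_log h2]
  have keysum : ∀ u v : Y,
      Pψ u ≤ Real.exp ((K + Λ ^ (-η) * H) * dist u v ^ η) * Pψ v := by
    intro u v
    exact hasSum_le (fun i => key u v i) (hP u) ((hP v).mul_left _)
  intro x y
  have hCd : 0 ≤ (K + Λ ^ (-η) * H) * dist x y ^ η :=
    mul_nonneg hCcoef (Real.rpow_nonneg dist_nonneg _)
  rcases isEmpty_or_nonempty ι with h | h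
  · have hzero : ∀ u : Y, Pψ u = 0 := by
      intro u
      have h0 : HasSum (fun i : ι => ζ (inv i u) * ψ (inv i u)) 0 := by
        rw [show (fun i : ι => ζ (inv i u) * ψ (inv i u)) = fun _ => (0:ℝ) from
          funext fun i => isEmptyElim i]
        exact hasSum_zero
      exact (hP u).unique h0
    simp [hzero, hCd]
  · have hpos : ∀ u : Y, 0 < Pψ u := by
      intro u
      obtain ⟨i⟩ := h
      exact lt_of_lt_of_le (mul_pos (hζ _) (hψ _))
        (le_hasSum (hP u) i fun j _ => (mul_pos (hζ _) (hψ _)).le)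
    have hbound : ∀ u v : Y, Real.log (Pψ u) - Real.log (Pψ v)
        ≤ (K + Λ ^ (-η) * H) * dist u v ^ η := by
      intro u v
      have h1 := Real.log_le_log (hpos u) (keysum u v)
      rw [Real.log_mul (Real.exp_pos _).ne' (hpos v).ne', Real.log_exp] at h1
      linarith
    rw [abs_sub_le_iff]
    constructor
    · exact hbound x y
    · have := hbound y x
      rwa [dist_comm] at this
end

section
/- Fix $\lambda > 1$, $K > 0$, $\eta \in (0,1]$, and let $R > 0$, $\xi \in (0, e^{-R})$ satisfy $R(1 - \xi e^R) \ge K + \lambda^{-\eta} R$. Let $P_m$ be the transfer operator of a full-branch uniformly expanding map with expansion $\lambda$ and distortion constant $K$ as above. Let $\psi_1, \psi_2 : Y \to (0,\infty)$ with $|\psi_j|_{\eta,\ell} \le R$ and $\int_Y \psi_1\,dm = \int_Y \psi_2\,dm$. Define $\psi_j' = P_m\psi_j - \xi \int_Y \psi_j\,dm$. Then: (a) $\psi_j' > 0$ and $|\psi_j'|_{\eta,\ell} \le R$ for $j=1,2$; (b) $P_m\psi_1 - P_m\psi_2 = \psi_1' - \psi_2'$; (c) $\int_Y \psi_1'\,dm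 = \int_Y \psi_2'\,dm = (1-\xi)\int_Y \psi_1\,dm$. -/
/-!
Each branch of `P_m` contracts distances by `λ` and has log-Lipschitz weight, so the summands of
`P_m ψ` at `x` and `y` compare with ratio `exp (R' d(x,y)^η)`, where `R' = K + λ^{-η} R`; summing,
`P_m ψ x ≤ exp (R' d(x,y)^η) P_m ψ y`. Since `diam Y ≤ 1` and `∫ P_m ψ = ∫ ψ`, this Harnack
inequality gives `∫ ψ ≤ e^R P_m ψ`, so removing the constant `ξ ∫ ψ < e^{-R} ∫ ψ` keeps positivity.
With `β = ξ e^R` and `s = R d(x,y)^η`, convexity of `exp` gives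
`exp ((1 - β) s) ≤ (1 - β) e^s + β`; as `R' ≤ (1 - β) R` and `ξ ∫ ψ ≤ β P_m ψ y`, this yields
`P_m ψ x - ξ ∫ ψ ≤ e^s (P_m ψ y - ξ ∫ ψ)`, the log-Hölder bound with constant `R`.
-/

open MeasureTheory

/-- The paper's `|ψ|_{η,ℓ} ≤ R`. -/
def LogHolderWith {Y : Type*} [PseudoMetricSpace Y] (R η : ℝ) (ψ : Y → ℝ) : Prop :=
  ∀ x y, |Real.log (ψ x) - Real.log (ψ y)| ≤ R * dist x y ^ η

lemma LogHolderWith.of_sub_le {Y : Type*} [PseudoMetricSpace Y] {R η : ℝ} {ψ : Y → ℝ}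
    (h : ∀ x y, Real.log (ψ x) - Real.log (ψ y) ≤ R * dist x y ^ η) : LogHolderWith R η ψ :=
  fun x y => abs_sub_le_iff.2 ⟨h x y, dist_comm x y ▸ h y x⟩

lemma LogHolderWith.sub_le {Y : Type*} [PseudoMetricSpace Y] {R η : ℝ} {ψ : Y → ℝ}
    (h : LogHolderWith R η ψ) (x y : Y) : Real.log (ψ x) - Real.log (ψ y) ≤ R * dist x y ^ η :=
  (le_abs_self _).trans (h x y)

lemma le_exp_mul_of_log_sub_le {u v t : ℝ} (hu : 0 < u) (hv : 0 < v)
    (h : Real.log u - Real.log v ≤ t) : u ≤ Real.exp t * v := by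
  calc u = Real.exp (Real.log u) := (Real.exp_log hu).symm
    _ ≤ Real.exp (t + Real.log v) := Real.exp_le_exp.2 (by linarith)
    _ = Real.exp t * v := by rw [Real.exp_add, Real.exp_log hv]

lemma exp_mul_le_mul_exp_add (s : ℝ) {β : ℝ} (hβ₀ : 0 ≤ β) (hβ₁ : β ≤ 1) :
    Real.exp ((1 - β) * s) ≤ (1 - β) * Real.exp s + β := by
  simpa using convexOn_exp.2 (Set.mem_univ s) (Set.mem_univ 0) (sub_nonneg.2 hβ₁) hβ₀ (by ring)

lemma sub_le_exp_mul_sub {a b d s β : ℝ} (hβ₀ : 0 ≤ β) (hβ₁ : β ≤ 1) (hs : 0 ≤ s) (hb : 0 ≤ b)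
    (hab : a ≤ Real.exp ((1 - β) * s) * b) (hd : d ≤ β * b) :
    a - d ≤ Real.exp s * (b - d) := by
  have hconv := mul_le_mul_of_nonneg_right (exp_mul_le_mul_exp_add s hβ₀ hβ₁) hb
  have hes : 0 ≤ Real.exp s - 1 := sub_nonneg.2 (Real.one_le_exp hs)
  nlinarith [mul_le_mul_of_nonneg_left hd hes]

lemma rpow_le_rpow_neg_mul {Λ a b η : ℝ} (hΛ : 0 < Λ) (hη : 0 ≤ η) (ha : 0 ≤ a)
    (h : Λ * a ≤ b) : a ^ η ≤ Λ ^ (-η) * b ^ η := by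
  have hab : a ≤ Λ⁻¹ * b := by rwa [inv_mul_eq_div, le_div_iff₀ hΛ, mul_comm]
  calc a ^ η ≤ (Λ⁻¹ * b) ^ η := Real.rpow_le_rpow ha hab hη
    _ = Λ ^ (-η) * b ^ η := by
      rw [Real.mul_rpow (inv_nonneg.2 hΛ.le) ((mul_nonneg hΛ.le ha).trans h),
        Real.inv_rpow hΛ.le, Real.rpow_neg hΛ.le]

section Harnack

variable {Y : Type*} [PseudoMetricSpace Y] [MeasurableSpace Y] {m : Measure Y}
  [IsProbabilityMeasure m] {P : Y → ℝ} {R R' η ξ : ℝ}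

lemma integral_le_exp_mul_of_le_exp_mul (hdiam : ∀ x y : Y, dist x y ≤ 1) (hη : 0 ≤ η)
    (hR : 0 ≤ R) (hR' : R' ≤ R) (hP0 : ∀ y, 0 ≤ P y) (hPint : Integrable P m)
    (hratio : ∀ x y, P x ≤ Real.exp (R' * dist x y ^ η) * P y) (y : Y) :
    ∫ x, P x ∂m ≤ Real.exp R * P y := by
  have hbound : ∀ x, P x ≤ Real.exp R * P y := by
    intro x
    have hexp : R' * dist x y ^ η ≤ R :=
      calc R' * dist x y ^ η ≤ R * dist x y ^ η :=
            mul_le_mul_of_nonneg_right hR' (Real.rpow_nonneg dist_nonneg η)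
        _ ≤ R := mul_le_of_le_one_right hR (Real.rpow_le_one dist_nonneg (hdiam x y) hη)
    exact (hratio x y).trans (mul_le_mul_of_nonneg_right (Real.exp_le_exp.2 hexp) (hP0 y))
  simpa using integral_mono hPint (integrable_const _) hbound

lemma sub_mul_integral_pos_of_le_exp_mul (hdiam : ∀ x y : Y, dist x y ≤ 1) (hη : 0 ≤ η)
    (hR : 0 ≤ R) (hR' : R' ≤ R) (hξ : 0 ≤ ξ) (hξR : ξ * Real.exp R < 1)
    (hP0 : ∀ y, 0 ≤ P y) (hPint : Integrable P m) (hc : 0 < ∫ x, P x ∂m)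
    (hratio : ∀ x y, P x ≤ Real.exp (R' * dist x y ^ η) * P y) (y : Y) :
    0 < P y - ξ * ∫ x, P x ∂m := by
  have hlow := integral_le_exp_mul_of_le_exp_mul hdiam hη hR hR' hP0 hPint hratio y
  have hPy : 0 < P y := pos_of_mul_pos_right (hc.trans_le hlow) (Real.exp_pos R).le
  nlinarith [mul_le_mul_of_nonneg_left hlow hξ]

lemma logHolderWith_sub_mul_integral_of_le_exp_mul (hdiam : ∀ x y : Y, dist x y ≤ 1)
    (hη : 0 ≤ η) (hR : 0 ≤ R) (hξ : 0 ≤ ξ) (hξR : ξ * Real.exp R < 1)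
    (hR'ξ : R' ≤ R * (1 - ξ * Real.exp R)) (hP0 : ∀ y, 0 ≤ P y) (hPint : Integrable P m)
    (hpos : ∀ y, 0 < P y - ξ * ∫ x, P x ∂m)
    (hratio : ∀ x y, P x ≤ Real.exp (R' * dist x y ^ η) * P y) :
    LogHolderWith R η (fun y => P y - ξ * ∫ x, P x ∂m) := by
  set β := ξ * Real.exp R
  have hβ₀ : 0 ≤ β := by positivity
  have hR' : R' ≤ R := hR'ξ.trans (mul_le_of_le_one_right hR (by linarith))
  refine LogHolderWith.of_sub_le fun x y => ?_
  have ht : 0 ≤ dist x y ^ η := Real.rpow_nonneg dist_nonneg η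
  have hab : P x ≤ Real.exp ((1 - β) * (R * dist x y ^ η)) * P y := by
    refine (hratio x y).trans (mul_le_mul_of_nonneg_right (Real.exp_le_exp.2 ?_) (hP0 y))
    nlinarith [mul_le_mul_of_nonneg_right hR'ξ ht]
  have hd : ξ * ∫ x, P x ∂m ≤ β * P y := by
    have := mul_le_mul_of_nonneg_left
      (integral_le_exp_mul_of_le_exp_mul hdiam hη hR hR' hP0 hPint hratio y) hξ
    linarith
  have hmain := sub_le_exp_mul_sub hβ₀ hξR.le (mul_nonneg hR ht) (hP0 y) hab hd
  have hlog := Real.log_le_log (hpos x) hmain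
  rw [Real.log_mul (Real.exp_pos _).ne' (hpos y).ne', Real.log_exp] at hlog
  linarith

end Harnack

lemma integral_pos_of_forall_pos {α : Type*} [MeasurableSpace α] {μ : Measure α} [NeZero μ]
    {f : α → ℝ} (hf : ∀ x, 0 < f x) (hfi : Integrable f μ) : 0 < ∫ x, f x ∂μ := by
  rw [integral_pos_iff_support_of_nonneg (fun x => (hf x).le) hfi,
    Function.support_eq_univ fun x => (hf x).ne']
  exact Measure.measure_univ_pos.2 (NeZero.ne μ)

lemma integral_sub_mul_const {α : Type*} [MeasurableSpace α] {μ : Measure α}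
    [IsProbabilityMeasure μ] {f : α → ℝ} (hfi : Integrable f μ) (ξ : ℝ) :
    ∫ x, (f x - ξ * ∫ y, f y ∂μ) ∂μ = (1 - ξ) * ∫ y, f y ∂μ := by
  rw [integral_sub hfi (integrable_const _)]
  simp only [integral_const, probReal_univ, one_smul]
  ring

section FullBranch

variable {Y ι : Type*} [MetricSpace Y] {A : ι → Set Y} {F : Y → Y} {inv : ι → Y → Y}
  {ζ ψ P : Y → ℝ} {Λ K η R : ℝ}

lemma branch_weight_le (hΛ : 0 < Λ) (hη : 0 ≤ η) (hR : 0 ≤ R)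
    (hinv_mem : ∀ i y, inv i y ∈ A i) (hinv_right : ∀ i y, F (inv i y) = y)
    (hexp : ∀ i, ∀ x ∈ A i, ∀ y ∈ A i, Λ * dist x y ≤ dist (F x) (F y))
    (hdist : ∀ i, ∀ x ∈ A i, ∀ y ∈ A i,
      |Real.log (ζ x) - Real.log (ζ y)| ≤ K * dist (F x) (F y) ^ η)
    (hζ : ∀ x, 0 < ζ x) (hψ : ∀ x, 0 < ψ x) (hψR : LogHolderWith R η ψ) (i : ι) (x y : Y) :
    ζ (inv i x) * ψ (inv i x) ≤
      Real.exp ((K + Λ ^ (-η) * R) * dist x y ^ η) * (ζ (inv i y) * ψ (inv i y)) := by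
  have hζ_sub : Real.log (ζ (inv i x)) - Real.log (ζ (inv i y)) ≤ K * dist x y ^ η := by
    simpa only [hinv_right] using
      (le_abs_self _).trans (hdist i _ (hinv_mem i x) _ (hinv_mem i y))
  have hcontr : Λ * dist (inv i x) (inv i y) ≤ dist x y := by
    simpa only [hinv_right] using hexp i _ (hinv_mem i x) _ (hinv_mem i y)
  have hψ_sub : Real.log (ψ (inv i x)) - Real.log (ψ (inv i y)) ≤
      R * (Λ ^ (-η) * dist x y ^ η) :=
    (hψR.sub_le _ _).trans (mul_le_mul_of_nonneg_left
      (rpow_le_rpow_neg_mul hΛ hη dist_nonneg hcontr) hR)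
  refine le_exp_mul_of_log_sub_le (mul_pos (hζ _) (hψ _)) (mul_pos (hζ _) (hψ _)) ?_
  rw [Real.log_mul (hζ _).ne' (hψ _).ne', Real.log_mul (hζ _).ne' (hψ _).ne']
  linarith

lemma transfer_le_exp_mul (hΛ : 0 < Λ) (hη : 0 ≤ η) (hR : 0 ≤ R)
    (hinv_mem : ∀ i y, inv i y ∈ A i) (hinv_right : ∀ i y, F (inv i y) = y)
    (hexp : ∀ i, ∀ x ∈ A i, ∀ y ∈ A i, Λ * dist x y ≤ dist (F x) (F y))
    (hdist : ∀ i, ∀ x ∈ A i, ∀ y ∈ A i,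
      |Real.log (ζ x) - Real.log (ζ y)| ≤ K * dist (F x) (F y) ^ η)
    (hζ : ∀ x, 0 < ζ x) (hψ : ∀ x, 0 < ψ x) (hψR : LogHolderWith R η ψ)
    (hP : ∀ y, HasSum (fun i => ζ (inv i y) * ψ (inv i y)) (P y)) (x y : Y) :
    P x ≤ Real.exp ((K + Λ ^ (-η) * R) * dist x y ^ η) * P y :=
  hasSum_le (branch_weight_le hΛ hη hR hinv_mem hinv_right hexp hdist hζ hψ hψR · x y)
    (hP x) ((hP y).mul_left _)

variable [MeasurableSpace Y] {m : Measure Y} [IsProbabilityMeasure m] {ξ : ℝ}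

lemma transfer_sub_mul_integral_pos_and_logHolderWith (hdiam : ∀ x y : Y, dist x y ≤ 1)
    (hΛ : 0 < Λ) (hη : 0 ≤ η) (hR : 0 ≤ R) (hξ : 0 ≤ ξ) (hξR : ξ < Real.exp (-R))
    (hRξ : K + Λ ^ (-η) * R ≤ R * (1 - ξ * Real.exp R))
    (hinv_mem : ∀ i y, inv i y ∈ A i) (hinv_right : ∀ i y, F (inv i y) = y)
    (hexp : ∀ i, ∀ x ∈ A i, ∀ y ∈ A i, Λ * dist x y ≤ dist (F x) (F y))
    (hdist : ∀ i, ∀ x ∈ A i, ∀ y ∈ A i,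
      |Real.log (ζ x) - Real.log (ζ y)| ≤ K * dist (F x) (F y) ^ η)
    (hζ : ∀ x, 0 < ζ x) (hψ : ∀ x, 0 < ψ x) (hψR : LogHolderWith R η ψ)
    (hint : Integrable ψ m) (hP : ∀ y, HasSum (fun i => ζ (inv i y) * ψ (inv i y)) (P y))
    (hPint : Integrable P m) (hdual : ∫ y, P y ∂m = ∫ x, ψ x ∂m) :
    (∀ y, 0 < P y - ξ * ∫ x, ψ x ∂m) ∧ LogHolderWith R η (fun y => P y - ξ * ∫ x, ψ x ∂m) := by
  have hratio := transfer_le_exp_mul hΛ hη hR hinv_mem hinv_right hexp hdist hζ hψ hψR hP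
  have hP0 : ∀ y, 0 ≤ P y := fun y => (hP y).nonneg fun i => (mul_pos (hζ _) (hψ _)).le
  have hξR' : ξ * Real.exp R < 1 := by
    simpa [← Real.exp_add] using mul_lt_mul_of_pos_right hξR (Real.exp_pos R)
  have hR' : K + Λ ^ (-η) * R ≤ R :=
    hRξ.trans (mul_le_of_le_one_right hR (by linarith [mul_nonneg hξ (Real.exp_pos R).le]))
  have hc : 0 < ∫ y, P y ∂m := hdual ▸ integral_pos_of_forall_pos hψ hint
  have hpos := sub_mul_integral_pos_of_le_exp_mul hdiam hη hR hR' hξ hξR' hP0 hPint hc hratio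
  rw [← hdual]
  exact ⟨hpos, logHolderWith_sub_mul_integral_of_le_exp_mul hdiam hη hR hξ hξR' hRξ hP0 hPint
    hpos hratio⟩

end FullBranch

theorem coupling_step_general {Y : Type*} [MetricSpace Y] [MeasurableSpace Y]
    (m : Measure Y) [IsProbabilityMeasure m]
    (hdiam : ∀ x y : Y, dist x y ≤ 1)
    {ι : Type*} (A : ι → Set Y)
    (F : Y → Y) (inv : ι → Y → Y)
    (hinv_mem : ∀ i y, inv i y ∈ A i)
    (hinv_right : ∀ i y, F (inv i y) = y)
    (ζ : Y → ℝ) (hζ : ∀ x, 0 < ζ x)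
    (Λ K η R ξ : ℝ) (hΛ : 1 < Λ) (hη : η ∈ Set.Ioc (0:ℝ) 1)
    (hR : 0 < R) (hξ : ξ ∈ Set.Ioo 0 (Real.exp (-R)))
    (hRξ : K + Λ ^ (-η) * R ≤ R * (1 - ξ * Real.exp R))
    (hexp : ∀ i, ∀ x ∈ A i, ∀ y ∈ A i, Λ * dist x y ≤ dist (F x) (F y))
    (hdist : ∀ i, ∀ x ∈ A i, ∀ y ∈ A i,
      |Real.log (ζ x) - Real.log (ζ y)| ≤ K * dist (F x) (F y) ^ η)
    (ψ₁ ψ₂ : Y → ℝ) (hψ₁ : ∀ x, 0 < ψ₁ x) (hψ₂ : ∀ x, 0 < ψ₂ x)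
    (hψ₁R : ∀ x y : Y, |Real.log (ψ₁ x) - Real.log (ψ₁ y)| ≤ R * dist x y ^ η)
    (hψ₂R : ∀ x y : Y, |Real.log (ψ₂ x) - Real.log (ψ₂ y)| ≤ R * dist x y ^ η)
    (hint₁ : Integrable ψ₁ m) (hint₂ : Integrable ψ₂ m)
    (heq : ∫ x, ψ₁ x ∂m = ∫ x, ψ₂ x ∂m)
    (P₁ P₂ : Y → ℝ)
    (hP₁ : ∀ y, HasSum (fun i => ζ (inv i y) * ψ₁ (inv i y)) (P₁ y))
    (hP₂ : ∀ y, HasSum (fun i => ζ (inv i y) * ψ₂ (inv i y)) (P₂ y))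
    (hPint₁ : Integrable P₁ m) (hPint₂ : Integrable P₂ m)
    (hdual₁ : ∫ y, P₁ y ∂m = ∫ x, ψ₁ x ∂m)
    (hdual₂ : ∫ y, P₂ y ∂m = ∫ x, ψ₂ x ∂m) :
    ((∀ y, 0 < P₁ y - ξ * ∫ x, ψ₁ x ∂m) ∧ (∀ y, 0 < P₂ y - ξ * ∫ x, ψ₂ x ∂m) ∧
      (∀ x y : Y, |Real.log (P₁ x - ξ * ∫ z, ψ₁ z ∂m) -
          Real.log (P₁ y - ξ * ∫ z, ψ₁ z ∂m)| ≤ R * dist x y ^ η) ∧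
      (∀ x y : Y, |Real.log (P₂ x - ξ * ∫ z, ψ₂ z ∂m) -
          Real.log (P₂ y - ξ * ∫ z, ψ₂ z ∂m)| ≤ R * dist x y ^ η)) ∧
    (∀ y, P₁ y - P₂ y =
      (P₁ y - ξ * ∫ x, ψ₁ x ∂m) - (P₂ y - ξ * ∫ x, ψ₂ x ∂m)) ∧
    ((∫ y, (P₁ y - ξ * ∫ x, ψ₁ x ∂m) ∂m = (1 - ξ) * ∫ x, ψ₁ x ∂m) ∧
      (∫ y, (P₂ y - ξ * ∫ x, ψ₂ x ∂m) ∂m = (1 - ξ) * ∫ x, ψ₁ x ∂m)) := by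
  have hΛ₀ : 0 < Λ := one_pos.trans hΛ
  obtain ⟨hpos₁, hhol₁⟩ := transfer_sub_mul_integral_pos_and_logHolderWith hdiam hΛ₀ hη.1.le
    hR.le hξ.1.le hξ.2 hRξ hinv_mem hinv_right hexp hdist hζ hψ₁ hψ₁R hint₁ hP₁ hPint₁ hdual₁
  obtain ⟨hpos₂, hhol₂⟩ := transfer_sub_mul_integral_pos_and_logHolderWith hdiam hΛ₀ hη.1.le
    hR.le hξ.1.le hξ.2 hRξ hinv_mem hinv_right hexp hdist hζ hψ₂ hψ₂R hint₂ hP₂ hPint₂ hdual₂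
  refine ⟨⟨hpos₁, hpos₂, hhol₁, hhol₂⟩, fun y => by rw [heq]; ring, ?_, ?_⟩
  · rw [← hdual₁, integral_sub_mul_const hPint₁]
  · rw [heq, ← hdual₂, integral_sub_mul_const hPint₂]

/-- Coupling lemma (Lemma 3.4): with `R, ξ` satisfying `R(1-ξe^R) ≥ K + λ^{-η}R`,
for `ψ₁, ψ₂ > 0` with `|ψ_j|_{η,ℓ} ≤ R` and equal integrals, the functions
`ψ_j' = P_m ψ_j - ξ ∫ ψ_j dm` are positive with `|ψ_j'|_{η,ℓ} ≤ R`,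
`P_m ψ₁ - P_m ψ₂ = ψ₁' - ψ₂'`, and `∫ ψ₁' = ∫ ψ₂' = (1-ξ) ∫ ψ₁`. -/
theorem coupling_step {Y : Type*} [MetricSpace Y] [MeasurableSpace Y]
    (m : Measure Y) [IsProbabilityMeasure m]
    (hdiam : ∀ x y : Y, dist x y ≤ 1)
    {ι : Type*} [Countable ι] (A : ι → Set Y)
    (F : Y → Y) (inv : ι → Y → Y)
    (hinv_mem : ∀ i y, inv i y ∈ A i)
    (hinv_right : ∀ i y, F (inv i y) = y)
    (hinv_left : ∀ i, ∀ x ∈ A i, inv i (F x) = x)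
    (ζ : Y → ℝ) (hζ : ∀ x, 0 < ζ x)
    (Λ K η R ξ : ℝ) (hΛ : 1 < Λ) (hK : 0 < K) (hη : η ∈ Set.Ioc (0:ℝ) 1)
    (hR : 0 < R) (hξ : ξ ∈ Set.Ioo 0 (Real.exp (-R)))
    (hRξ : K + Λ ^ (-η) * R ≤ R * (1 - ξ * Real.exp R))
    (hexp : ∀ i, ∀ x ∈ A i, ∀ y ∈ A i, Λ * dist x y ≤ dist (F x) (F y))
    (hdist : ∀ i, ∀ x ∈ A i, ∀ y ∈ A i,
      |Real.log (ζ x) - Real.log (ζ y)| ≤ K * dist (F x) (F y) ^ η)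
    (ψ₁ ψ₂ : Y → ℝ) (hψ₁ : ∀ x, 0 < ψ₁ x) (hψ₂ : ∀ x, 0 < ψ₂ x)
    (hψ₁R : ∀ x y : Y, |Real.log (ψ₁ x) - Real.log (ψ₁ y)| ≤ R * dist x y ^ η)
    (hψ₂R : ∀ x y : Y, |Real.log (ψ₂ x) - Real.log (ψ₂ y)| ≤ R * dist x y ^ η)
    (hint₁ : Integrable ψ₁ m) (hint₂ : Integrable ψ₂ m)
    (heq : ∫ x, ψ₁ x ∂m = ∫ x, ψ₂ x ∂m)
    (P₁ P₂ : Y → ℝ)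
    (hP₁ : ∀ y, HasSum (fun i => ζ (inv i y) * ψ₁ (inv i y)) (P₁ y))
    (hP₂ : ∀ y, HasSum (fun i => ζ (inv i y) * ψ₂ (inv i y)) (P₂ y))
    (hPint₁ : Integrable P₁ m) (hPint₂ : Integrable P₂ m)
    (hdual₁ : ∫ y, P₁ y ∂m = ∫ x, ψ₁ x ∂m)
    (hdual₂ : ∫ y, P₂ y ∂m = ∫ x, ψ₂ x ∂m) :
    ((∀ y, 0 < P₁ y - ξ * ∫ x, ψ₁ x ∂m) ∧ (∀ y, 0 < P₂ y - ξ * ∫ x, ψ₂ x ∂m) ∧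
      (∀ x y : Y, |Real.log (P₁ x - ξ * ∫ z, ψ₁ z ∂m) -
          Real.log (P₁ y - ξ * ∫ z, ψ₁ z ∂m)| ≤ R * dist x y ^ η) ∧
      (∀ x y : Y, |Real.log (P₂ x - ξ * ∫ z, ψ₂ z ∂m) -
          Real.log (P₂ y - ξ * ∫ z, ψ₂ z ∂m)| ≤ R * dist x y ^ η)) ∧
    (∀ y, P₁ y - P₂ y =
      (P₁ y - ξ * ∫ x, ψ₁ x ∂m) - (P₂ y - ξ * ∫ x, ψ₂ x ∂m)) ∧
    ((∫ y, (P₁ y - ξ * ∫ x, ψ₁ x ∂m) ∂m = (1 - ξ) * ∫ x, ψ₁ x ∂m) ∧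
      (∫ y, (P₂ y - ξ * ∫ x, ψ₂ x ∂m) ∂m = (1 - ξ) * ∫ x, ψ₁ x ∂m)) :=
  coupling_step_general m hdiam A F inv hinv_mem hinv_right ζ hζ Λ K η R ξ hΛ hη hR hξ hRξ hexp
    hdist ψ₁ ψ₂ hψ₁ hψ₂ hψ₁R hψ₂R hint₁ hint₂ heq P₁ P₂ hP₁ hP₂ hPint₁ hPint₂ hdual₁ hdual₂
end

section
/- Let $R > 0$, $\xi \in (0,e^{-R})$ satisfy $R(1-\xi e^R) \ge K + \lambda^{-\eta}R$, and set $\gamma = 1-\xi$, $C = 4e^R(1+R)$. Under the uniformly expanding hypotheses (expansion constant $\lambda > 1$, distortion constant $K$, H\"older exponent $\eta \in (0,1]$), for every $\phi : Y \to \mathbb{R}$ with $|\phi|_\eta < \infty$ and $\int_Y \phi\,dm = 0$, and every $n \ge 1$: $\|P_m^n\phi\|_\eta \le C\gamma^n |\phi|_\eta$. -/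
/-!
Densities in the cone `holderCone η R` (nonnegative, with `ψ u ≤ exp (R d(u,v)^η) ψ v`) are
pinched between `e^{-R}` and `e^R` times their mass. The transfer operator maps this cone into
the narrower one with constant `K + Λ^{-η} R`, whose elements lie above `e^{-(K + Λ^{-η} R)}`
times their mass; the condition on `R` and `ξ` is exactly what makes the density stay in the
original cone after the constant `ξ · mass` is removed. Writing `φ = (φ + b) - b` with both
parts in the cone and of equal mass, and removing the same constant from both at each step,
`P^n φ` is a difference of two cone elements of mass `(1 - ξ)^n b`, which bounds its sup and
Hölder norms.
-/

open MeasureTheory Real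

lemma exp_sub_one_le_mul_exp (x : ℝ) : exp x - 1 ≤ x * exp x := by
  have h := add_one_le_exp (-x)
  have h' : exp (-x) * exp x = 1 := by rw [← exp_add]; simp
  nlinarith [exp_pos x]

lemma exp_sub_exp_neg_le {r : ℝ} (hr : 0 ≤ r) : exp r - exp (-r) ≤ 2 * r * exp r := by
  nlinarith [exp_sub_one_le_mul_exp r, add_one_le_exp (-r), one_le_exp hr]

lemma mul_exp_sub_one_le {R r ξ t : ℝ} (hR : 0 ≤ R) (hξ : 0 ≤ ξ)
    (hξR : ξ * R * exp R ≤ R - r) (ht₀ : 0 ≤ t) (ht₁ : t ≤ 1) :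
    ξ * (exp (R * t) - 1) ≤ exp (-r) * (exp (R * t) - exp (r * t)) := by
  have hgap : exp (r * t) * ((R - r) * t) ≤ exp (R * t) - exp (r * t) := by
    have h : exp (R * t) = exp (r * t) * exp ((R - r) * t) := by rw [← exp_add]; ring_nf
    nlinarith [add_one_le_exp ((R - r) * t), exp_pos (r * t)]
  have hRt : exp (R * t) ≤ exp R * exp (-r) * exp (r * t) := by
    rw [← exp_add, ← exp_add, exp_le_exp]
    nlinarith [mul_nonneg (mul_nonneg hξ hR) (exp_pos R).le]
  calc ξ * (exp (R * t) - 1) ≤ ξ * (R * t * exp (R * t)) :=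
        mul_le_mul_of_nonneg_left (exp_sub_one_le_mul_exp _) hξ
    _ ≤ ξ * (R * t * (exp R * exp (-r) * exp (r * t))) := by gcongr
    _ = ξ * R * exp R * t * (exp (-r) * exp (r * t)) := by ring
    _ ≤ (R - r) * t * (exp (-r) * exp (r * t)) := by gcongr
    _ = exp (-r) * (exp (r * t) * ((R - r) * t)) := by ring
    _ ≤ exp (-r) * (exp (R * t) - exp (r * t)) := by gcongr

section

variable {Y ι : Type*}

noncomputable def transferOp (ζ : Y → ℝ) (inv : ι → Y → Y) (ψ : Y → ℝ)
    (y : Y) : ℝ :=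
  ∑' i, ζ (inv i y) * ψ (inv i y)

lemma transferOp_sub {ζ : Y → ℝ} {inv : ι → Y → Y} {f g : Y → ℝ}
    (hf : ∀ y, Summable fun i => ζ (inv i y) * f (inv i y))
    (hg : ∀ y, Summable fun i => ζ (inv i y) * g (inv i y)) :
    transferOp ζ inv (f - g) = transferOp ζ inv f - transferOp ζ inv g :=
  funext fun y => by
    simp only [transferOp, Pi.sub_apply, mul_sub]
    exact (hf y).tsum_sub (hg y)

variable [MetricSpace Y]

def holderCone (η r : ℝ) : Set (Y → ℝ) :=
  {ψ | (∀ u, 0 ≤ ψ u) ∧ ∀ u v, ψ u ≤ exp (r * dist u v ^ η) * ψ v}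

section Cone

variable {η r : ℝ} {ψ : Y → ℝ}

lemma const_mem_holderCone {c : ℝ} (hc : 0 ≤ c) (hr : 0 ≤ r) :
    (fun _ => c) ∈ holderCone (Y := Y) η r :=
  ⟨fun _ => hc, fun _ _ =>
    le_mul_of_one_le_left hc (one_le_exp (mul_nonneg hr (rpow_nonneg dist_nonneg _)))⟩

lemma mem_holderCone_of_sub_le {H : ℝ} (h₀ : ∀ u, 0 ≤ ψ u)
    (hψ : ∀ u v, ψ u - ψ v ≤ H * dist u v ^ η) (hH : ∀ u, H ≤ r * ψ u) :
    ψ ∈ holderCone η r := by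
  refine ⟨h₀, fun u v => ?_⟩
  have ht : 0 ≤ dist u v ^ η := rpow_nonneg dist_nonneg _
  calc ψ u ≤ (r * dist u v ^ η + 1) * ψ v := by nlinarith [hψ u v, hH v]
    _ ≤ exp (r * dist u v ^ η) * ψ v := by gcongr; exacts [h₀ v, add_one_le_exp _]

lemma add_const_mem_holderCone {R H : ℝ} (hR : 0 < R) (hH : 0 ≤ H) {φ : Y → ℝ}
    (hφ : ∀ u v, |φ u - φ v| ≤ H * dist u v ^ η) (hbound : ∀ u, |φ u| ≤ H) :
    (fun u => φ u + (H + H / R)) ∈ holderCone η R := by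
  have hlow u : -H ≤ φ u := (abs_le.1 (hbound u)).1
  refine mem_holderCone_of_sub_le (H := H) (fun u => ?_) (fun u v => ?_) (fun u => ?_)
  · linarith [hlow u, div_nonneg hH hR.le]
  · linarith [le_of_abs_le (hφ u v)]
  · rw [mul_add, mul_add, mul_div_cancel₀ _ hR.ne']
    nlinarith [hlow u]

lemma sub_le_of_mem_holderCone {M : ℝ} (hr : 0 ≤ r) (hψ : ψ ∈ holderCone η r)
    (hM : ∀ u, ψ u ≤ M) (u v : Y) : ψ u - ψ v ≤ r * M * dist u v ^ η := by
  set s := r * dist u v ^ η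
  have hs : 0 ≤ s := mul_nonneg hr (rpow_nonneg dist_nonneg _)
  have hv : exp (-s) * ψ u ≤ ψ v := by
    have h := mul_le_mul_of_nonneg_left (hψ.2 u v) (exp_pos (-s)).le
    rwa [← mul_assoc, ← exp_add, neg_add_cancel, exp_zero, one_mul] at h
  have hexp : 1 - exp (-s) ≤ s := by linarith [add_one_le_exp (-s)]
  have hexp' : 0 ≤ 1 - exp (-s) := by
    linarith [exp_le_one_iff.2 (neg_nonpos.2 hs)]
  calc ψ u - ψ v ≤ ψ u * (1 - exp (-s)) := by linarith
    _ ≤ M * s := mul_le_mul (hM u) hexp hexp' ((hψ.1 u).trans (hM u))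
    _ = r * M * dist u v ^ η := by ring

lemma abs_sub_le_of_mem_holderCone {M : ℝ} (hr : 0 ≤ r) (hψ : ψ ∈ holderCone η r)
    (hM : ∀ u, ψ u ≤ M) (u v : Y) : |ψ u - ψ v| ≤ r * M * dist u v ^ η := by
  have h := sub_le_of_mem_holderCone hr hψ hM v u
  rw [dist_comm] at h
  exact abs_sub_le_iff.2 ⟨sub_le_of_mem_holderCone hr hψ hM u v, h⟩

lemma le_exp_mul_of_mem_holderCone (hdiam : ∀ u v : Y, dist u v ≤ 1) (hη : 0 ≤ η)
    (hr : 0 ≤ r) (hψ : ψ ∈ holderCone η r) (u v : Y) : ψ u ≤ exp r * ψ v :=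
  (hψ.2 u v).trans <| mul_le_mul_of_nonneg_right
    (exp_le_exp.2 (mul_le_of_le_one_right hr (rpow_le_one dist_nonneg (hdiam u v) hη))) (hψ.1 v)

lemma sub_const_mem_holderCone {R r ξ I : ℝ} {q : Y → ℝ} (hR : 0 ≤ R) (hξ : 0 ≤ ξ)
    (hξe : ξ ≤ exp (-R)) (hξR : ξ * R * exp R ≤ R - r) (hη : 0 ≤ η)
    (hdiam : ∀ u v : Y, dist u v ≤ 1) (hI : 0 ≤ I) (hq : q ∈ holderCone η r)
    (hlow : ∀ y, exp (-r) * I ≤ q y) : (fun y => q y - ξ * I) ∈ holderCone η R := by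
  have hrR : r ≤ R := by nlinarith [mul_nonneg (mul_nonneg hξ hR) (exp_pos R).le]
  have hξr : ξ ≤ exp (-r) := hξe.trans (exp_le_exp.2 (neg_le_neg hrR))
  refine ⟨fun y => sub_nonneg.2 ((mul_le_mul_of_nonneg_right hξr hI).trans (hlow y)),
    fun u v => ?_⟩
  set t := dist u v ^ η
  have ht₀ : 0 ≤ t := rpow_nonneg dist_nonneg _
  have hgap : 0 ≤ exp (R * t) - exp (r * t) := sub_nonneg.2 (exp_le_exp.2 (by gcongr))
  have hkey := mul_le_mul_of_nonneg_left
    (mul_exp_sub_one_le hR hξ hξR ht₀ (rpow_le_one dist_nonneg (hdiam u v) hη)) hI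
  have hlow' := mul_le_mul_of_nonneg_right (hlow v) hgap
  nlinarith [hq.2 u v]

variable [MeasurableSpace Y] {m : Measure Y} [IsProbabilityMeasure m]

lemma le_exp_mul_integral_of_mem_holderCone (hdiam : ∀ u v : Y, dist u v ≤ 1) (hη : 0 ≤ η)
    (hr : 0 ≤ r) (hψ : ψ ∈ holderCone η r) (hint : Integrable ψ m) (y : Y) :
    ψ y ≤ exp r * ∫ u, ψ u ∂m :=
  calc ψ y = ∫ _u, ψ y ∂m := by simp
    _ ≤ ∫ u, exp r * ψ u ∂m := integral_mono (integrable_const _) (hint.const_mul _)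
        fun u => le_exp_mul_of_mem_holderCone hdiam hη hr hψ y u
    _ = exp r * ∫ u, ψ u ∂m := integral_const_mul _ _

lemma exp_neg_mul_integral_le_of_mem_holderCone (hdiam : ∀ u v : Y, dist u v ≤ 1)
    (hη : 0 ≤ η) (hr : 0 ≤ r) (hψ : ψ ∈ holderCone η r) (hint : Integrable ψ m)
    (y : Y) :
    exp (-r) * ∫ u, ψ u ∂m ≤ ψ y := by
  rw [exp_neg, inv_mul_le_iff₀ (exp_pos r)]
  calc ∫ u, ψ u ∂m ≤ ∫ _u, exp r * ψ y ∂m := integral_mono hint (integrable_const _)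
        fun u => le_exp_mul_of_mem_holderCone hdiam hη hr hψ u y
    _ = exp r * ψ y := by simp

lemma eq_zero_of_integral_eq_zero_of_mem_holderCone (hdiam : ∀ u v : Y, dist u v ≤ 1)
    (hη : 0 ≤ η) (hr : 0 ≤ r) (hψ : ψ ∈ holderCone η r) (hint : Integrable ψ m)
    (h : ∫ u, ψ u ∂m = 0) : ψ = 0 :=
  funext fun y => le_antisymm
    (by simpa [h] using le_exp_mul_integral_of_mem_holderCone hdiam hη hr hψ hint y) (hψ.1 y)

lemma abs_le_of_holder_of_integral_eq_zero (hdiam : ∀ u v : Y, dist u v ≤ 1) (hη : 0 ≤ η)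
    {H : ℝ} (hH : 0 ≤ H) {φ : Y → ℝ} (hφ : ∀ u v, |φ u - φ v| ≤ H * dist u v ^ η)
    (hint : Integrable φ m) (hmean : ∫ y, φ y ∂m = 0) (u : Y) : |φ u| ≤ H := by
  have h : φ u = ∫ y, (φ u - φ y) ∂m := by
    rw [integral_sub (integrable_const _) hint, hmean]
    simp
  rw [h, ← Real.norm_eq_abs]
  refine (norm_integral_le_of_norm_le_const (C := H) (.of_forall fun y => ?_)).trans_eq (by simp)
  exact (hφ u y).trans (mul_le_of_le_one_right hH (rpow_le_one dist_nonneg (hdiam u y) hη))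

lemma abs_sub_add_div_rpow_dist_le_of_mem_holderCone {ψ₁ ψ₂ : Y → ℝ}
    (hdiam : ∀ u v : Y, dist u v ≤ 1) (hη : 0 ≤ η) (hr : 0 ≤ r)
    (h₁ : ψ₁ ∈ holderCone η r) (h₂ : ψ₂ ∈ holderCone η r)
    (hint₁ : Integrable ψ₁ m) (hint₂ : Integrable ψ₂ m)
    (heq : ∫ u, ψ₂ u ∂m = ∫ u, ψ₁ u ∂m) {x z w : Y} (hzw : z ≠ w) :
    |ψ₁ x - ψ₂ x| + |(ψ₁ z - ψ₂ z) - (ψ₁ w - ψ₂ w)| / dist z w ^ η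
      ≤ 4 * r * exp r * ∫ u, ψ₁ u ∂m := by
  set I := ∫ u, ψ₁ u ∂m
  have hI : 0 ≤ I := integral_nonneg h₁.1
  have up₁ := le_exp_mul_integral_of_mem_holderCone hdiam hη hr h₁ hint₁
  have up₂ := le_exp_mul_integral_of_mem_holderCone hdiam hη hr h₂ hint₂
  have low₁ := exp_neg_mul_integral_le_of_mem_holderCone hdiam hη hr h₁ hint₁ x
  have low₂ := exp_neg_mul_integral_le_of_mem_holderCone hdiam hη hr h₂ hint₂ x
  rw [heq] at up₂ low₂
  have hsup : |ψ₁ x - ψ₂ x| ≤ 2 * r * exp r * I := by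
    have h := mul_le_mul_of_nonneg_right (exp_sub_exp_neg_le hr) hI
    rw [abs_sub_le_iff]
    constructor <;> nlinarith [up₁ x, up₂ x]
  have ht : 0 < dist z w ^ η := rpow_pos_of_pos (dist_pos.2 hzw) η
  have hhol : |(ψ₁ z - ψ₂ z) - (ψ₁ w - ψ₂ w)| ≤ 2 * r * exp r * I * dist z w ^ η :=
    calc |(ψ₁ z - ψ₂ z) - (ψ₁ w - ψ₂ w)|
        = |(ψ₁ z - ψ₁ w) - (ψ₂ z - ψ₂ w)| := by ring_nf
      _ ≤ |ψ₁ z - ψ₁ w| + |ψ₂ z - ψ₂ w| := abs_sub _ _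
      _ ≤ r * (exp r * I) * dist z w ^ η + r * (exp r * I) * dist z w ^ η :=
        add_le_add (abs_sub_le_of_mem_holderCone hr h₁ up₁ z w)
          (abs_sub_le_of_mem_holderCone hr h₂ up₂ z w)
      _ = 2 * r * exp r * I * dist z w ^ η := by ring
  have hhol' := (div_le_iff₀ ht).2 hhol
  linarith

end Cone

/-- `inv i` is the inverse branch of `F` onto the partition element `A i`, and `ζ` the
reciprocal of the Jacobian of `F` with respect to the reference measure. -/
structure IsUniformlyExpanding (F : Y → Y) (A : ι → Set Y) (inv : ι → Y → Y)
    (ζ : Y → ℝ) (Λ K η : ℝ) : Prop where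
  inv_mem : ∀ i y, inv i y ∈ A i
  apply_inv : ∀ i y, F (inv i y) = y
  weight_pos : ∀ x, 0 < ζ x
  one_lt_expansion : 1 < Λ
  distortion_nonneg : 0 ≤ K
  exponent_mem : η ∈ Set.Ioc (0 : ℝ) 1
  expand : ∀ i, ∀ x ∈ A i, ∀ y ∈ A i, Λ * dist x y ≤ dist (F x) (F y)
  distortion : ∀ i, ∀ x ∈ A i, ∀ y ∈ A i,
    |log (ζ x) - log (ζ y)| ≤ K * dist (F x) (F y) ^ η

namespace IsUniformlyExpanding

variable {F : Y → Y} {A : ι → Set Y} {inv : ι → Y → Y} {ζ : Y → ℝ} {Λ K η : ℝ}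

lemma rpow_dist_inv_le (hF : IsUniformlyExpanding F A inv ζ Λ K η) (i : ι) (x y : Y) :
    dist (inv i x) (inv i y) ^ η ≤ Λ ^ (-η) * dist x y ^ η := by
  have hΛ : 0 < Λ := zero_lt_one.trans hF.one_lt_expansion
  have h := hF.expand i _ (hF.inv_mem i x) _ (hF.inv_mem i y)
  rw [hF.apply_inv, hF.apply_inv] at h
  calc dist (inv i x) (inv i y) ^ η ≤ (dist x y / Λ) ^ η := by
        gcongr
        · exact hF.exponent_mem.1.le
        · rwa [le_div_iff₀' hΛ]
    _ = Λ ^ (-η) * dist x y ^ η := by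
        rw [div_rpow dist_nonneg hΛ.le, rpow_neg hΛ.le, div_eq_inv_mul]

lemma weight_inv_le (hF : IsUniformlyExpanding F A inv ζ Λ K η) (i : ι) (x y : Y) :
    ζ (inv i x) ≤ exp (K * dist x y ^ η) * ζ (inv i y) := by
  have h := hF.distortion i _ (hF.inv_mem i x) _ (hF.inv_mem i y)
  rw [hF.apply_inv, hF.apply_inv] at h
  calc ζ (inv i x) = exp (log (ζ (inv i x))) := (exp_log (hF.weight_pos _)).symm
    _ ≤ exp (K * dist x y ^ η + log (ζ (inv i y))) :=
        exp_le_exp.2 (by linarith [le_of_abs_le h])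
    _ = exp (K * dist x y ^ η) * ζ (inv i y) := by rw [exp_add, exp_log (hF.weight_pos _)]

lemma transferOp_term_le (hF : IsUniformlyExpanding F A inv ζ Λ K η) {R : ℝ} (hR : 0 ≤ R)
    {ψ : Y → ℝ} (hψ : ψ ∈ holderCone η R) (i : ι) (x y : Y) :
    ζ (inv i x) * ψ (inv i x)
      ≤ exp ((K + Λ ^ (-η) * R) * dist x y ^ η) * (ζ (inv i y) * ψ (inv i y)) := by
  have hψ' : ψ (inv i x) ≤ exp (Λ ^ (-η) * R * dist x y ^ η) * ψ (inv i y) := by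
    refine (hψ.2 _ _).trans (mul_le_mul_of_nonneg_right (exp_le_exp.2 ?_) (hψ.1 _))
    nlinarith [hF.rpow_dist_inv_le i x y]
  calc ζ (inv i x) * ψ (inv i x)
      ≤ (exp (K * dist x y ^ η) * ζ (inv i y))
          * (exp (Λ ^ (-η) * R * dist x y ^ η) * ψ (inv i y)) :=
        mul_le_mul (hF.weight_inv_le i x y) hψ' (hψ.1 _)
          (mul_nonneg (exp_pos _).le (hF.weight_pos _).le)
    _ = exp ((K + Λ ^ (-η) * R) * dist x y ^ η) * (ζ (inv i y) * ψ (inv i y)) := by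
        rw [add_mul, exp_add]; ring

lemma summable_transferOp_term_of_summable (hF : IsUniformlyExpanding F A inv ζ Λ K η) {R : ℝ}
    (hR : 0 ≤ R) {ψ : Y → ℝ} (hψ : ψ ∈ holderCone η R) {x y : Y}
    (hs : Summable fun i => ζ (inv i x) * ψ (inv i x)) :
    Summable fun i => ζ (inv i y) * ψ (inv i y) :=
  .of_nonneg_of_le (fun _ => mul_nonneg (hF.weight_pos _).le (hψ.1 _))
    (fun i => hF.transferOp_term_le hR hψ i y x) (hs.mul_left _)

lemma transferOp_mem_holderCone (hF : IsUniformlyExpanding F A inv ζ Λ K η) {R : ℝ}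
    (hR : 0 ≤ R) {ψ : Y → ℝ} (hψ : ψ ∈ holderCone η R) :
    transferOp ζ inv ψ ∈ holderCone η (K + Λ ^ (-η) * R) := by
  refine ⟨fun y => tsum_nonneg fun _ => mul_nonneg (hF.weight_pos _).le (hψ.1 _),
    fun x y => ?_⟩
  by_cases hs : Summable fun i => ζ (inv i y) * ψ (inv i y)
  · calc transferOp ζ inv ψ x
        ≤ ∑' i, exp ((K + Λ ^ (-η) * R) * dist x y ^ η) * (ζ (inv i y) * ψ (inv i y)) :=
          (hF.summable_transferOp_term_of_summable hR hψ hs).tsum_le_tsum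
            (hF.transferOp_term_le hR hψ · x y) (hs.mul_left _)
      _ = _ := tsum_mul_left
  · have hsx : ¬ Summable fun i => ζ (inv i x) * ψ (inv i x) :=
      fun h => hs (hF.summable_transferOp_term_of_summable hR hψ h)
    simp only [transferOp, tsum_eq_zero_of_not_summable hs, tsum_eq_zero_of_not_summable hsx,
      mul_zero, le_refl]

end IsUniformlyExpanding

variable [MeasurableSpace Y] {m : Measure Y} [IsProbabilityMeasure m]

noncomputable def coneStep (m : Measure Y) (ζ : Y → ℝ) (inv : ι → Y → Y) (ξ : ℝ)
    (ψ : Y → ℝ) (y : Y) : ℝ :=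
  transferOp ζ inv ψ y - ξ * ∫ u, ψ u ∂m

namespace IsUniformlyExpanding

variable {F : Y → Y} {A : ι → Set Y} {inv : ι → Y → Y} {ζ : Y → ℝ}
  {Λ K η R ξ : ℝ} {ψ : Y → ℝ}

lemma summable_transferOp_term (hF : IsUniformlyExpanding F A inv ζ Λ K η)
    (hdiam : ∀ u v : Y, dist u v ≤ 1)
    (hdual : ∀ f, Integrable f m → ∫ y, transferOp ζ inv f y ∂m = ∫ y, f y ∂m)
    (hR : 0 ≤ R) (hψ : ψ ∈ holderCone η R) (hint : Integrable ψ m) (y : Y) :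
    Summable fun i => ζ (inv i y) * ψ (inv i y) := by
  by_contra hs
  have hzero : transferOp ζ inv ψ = 0 :=
    funext fun x => tsum_eq_zero_of_not_summable fun h =>
      hs (hF.summable_transferOp_term_of_summable hR hψ h)
  have hψ₀ : ψ = 0 := eq_zero_of_integral_eq_zero_of_mem_holderCone hdiam
    hF.exponent_mem.1.le hR hψ hint (by rw [← hdual ψ hint, hzero]; simp)
  exact hs (by simp [hψ₀])

lemma integrable_transferOp (hF : IsUniformlyExpanding F A inv ζ Λ K η)
    (hdiam : ∀ u v : Y, dist u v ≤ 1)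
    (hdual : ∀ f, Integrable f m → ∫ y, transferOp ζ inv f y ∂m = ∫ y, f y ∂m)
    (hR : 0 ≤ R) (hψ : ψ ∈ holderCone η R) (hint : Integrable ψ m) :
    Integrable (transferOp ζ inv ψ) m := by
  by_contra hni
  have hψ₀ : ψ = 0 := eq_zero_of_integral_eq_zero_of_mem_holderCone hdiam
    hF.exponent_mem.1.le hR hψ hint (by rw [← hdual ψ hint, integral_undef hni])
  have hzero : transferOp ζ inv ψ = 0 := funext fun y => by simp [transferOp, hψ₀]
  exact hni (hzero ▸ integrable_zero Y ℝ m)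

lemma coneStep_mem_holderCone (hF : IsUniformlyExpanding F A inv ζ Λ K η)
    (hdiam : ∀ u v : Y, dist u v ≤ 1)
    (hdual : ∀ f, Integrable f m → ∫ y, transferOp ζ inv f y ∂m = ∫ y, f y ∂m)
    (hR : 0 ≤ R) (hξ : 0 ≤ ξ) (hξe : ξ ≤ exp (-R))
    (hRξ : K + Λ ^ (-η) * R ≤ R * (1 - ξ * exp R))
    (hψ : ψ ∈ holderCone η R) (hint : Integrable ψ m) :
    coneStep m ζ inv ξ ψ ∈ holderCone η R := by
  have hη : 0 ≤ η := hF.exponent_mem.1.le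
  have hR' : 0 ≤ K + Λ ^ (-η) * R :=
    add_nonneg hF.distortion_nonneg
      (mul_nonneg (rpow_nonneg (by linarith [hF.one_lt_expansion]) _) hR)
  have hP := hF.transferOp_mem_holderCone hR hψ
  have hlow := exp_neg_mul_integral_le_of_mem_holderCone hdiam hη hR' hP
    (hF.integrable_transferOp hdiam hdual hR hψ hint)
  rw [hdual ψ hint] at hlow
  exact sub_const_mem_holderCone hR hξ hξe (by linarith) hη hdiam (integral_nonneg hψ.1) hP hlow

lemma integrable_coneStep (hF : IsUniformlyExpanding F A inv ζ Λ K η)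
    (hdiam : ∀ u v : Y, dist u v ≤ 1)
    (hdual : ∀ f, Integrable f m → ∫ y, transferOp ζ inv f y ∂m = ∫ y, f y ∂m)
    (hR : 0 ≤ R) (hψ : ψ ∈ holderCone η R) (hint : Integrable ψ m) :
    Integrable (coneStep m ζ inv ξ ψ) m :=
  (hF.integrable_transferOp hdiam hdual hR hψ hint).sub (integrable_const _)

lemma integral_coneStep (hF : IsUniformlyExpanding F A inv ζ Λ K η)
    (hdiam : ∀ u v : Y, dist u v ≤ 1)
    (hdual : ∀ f, Integrable f m → ∫ y, transferOp ζ inv f y ∂m = ∫ y, f y ∂m)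
    (hR : 0 ≤ R) (hψ : ψ ∈ holderCone η R) (hint : Integrable ψ m) :
    ∫ y, coneStep m ζ inv ξ ψ y ∂m = (1 - ξ) * ∫ y, ψ y ∂m := by
  unfold coneStep
  rw [integral_sub (hF.integrable_transferOp hdiam hdual hR hψ hint)
    (integrable_const _), hdual ψ hint]
  simp only [integral_const, probReal_univ, one_smul]
  ring

lemma iterate_coneStep_mem_holderCone (hF : IsUniformlyExpanding F A inv ζ Λ K η)
    (hdiam : ∀ u v : Y, dist u v ≤ 1)
    (hdual : ∀ f, Integrable f m → ∫ y, transferOp ζ inv f y ∂m = ∫ y, f y ∂m)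
    (hR : 0 ≤ R) (hξ : 0 ≤ ξ) (hξe : ξ ≤ exp (-R))
    (hRξ : K + Λ ^ (-η) * R ≤ R * (1 - ξ * exp R))
    (hψ : ψ ∈ holderCone η R) (hint : Integrable ψ m) (n : ℕ) :
    (coneStep m ζ inv ξ)^[n] ψ ∈ holderCone η R ∧
      Integrable ((coneStep m ζ inv ξ)^[n] ψ) m ∧
      ∫ y, (coneStep m ζ inv ξ)^[n] ψ y ∂m = (1 - ξ) ^ n * ∫ y, ψ y ∂m := by
  induction n with
  | zero => simpa using ⟨hψ, hint⟩
  | succ n ih =>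
    obtain ⟨hψn, hintn, hintegral⟩ := ih
    rw [Function.iterate_succ_apply', integral_coneStep hF hdiam hdual hR hψn hintn, hintegral,
      pow_succ]
    exact ⟨hF.coneStep_mem_holderCone hdiam hdual hR hξ hξe hRξ hψn hintn,
      hF.integrable_coneStep hdiam hdual hR hψn hintn, by ring⟩

lemma iterate_transferOp_sub (hF : IsUniformlyExpanding F A inv ζ Λ K η)
    (hdiam : ∀ u v : Y, dist u v ≤ 1)
    (hdual : ∀ f, Integrable f m → ∫ y, transferOp ζ inv f y ∂m = ∫ y, f y ∂m)
    (hR : 0 ≤ R) (hξ : 0 ≤ ξ) (hξe : ξ ≤ exp (-R))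
    (hRξ : K + Λ ^ (-η) * R ≤ R * (1 - ξ * exp R)) (n : ℕ) :
    ∀ {g₁ g₂ : Y → ℝ}, g₁ ∈ holderCone η R → g₂ ∈ holderCone η R →
      Integrable g₁ m → Integrable g₂ m → ∫ y, g₁ y ∂m = ∫ y, g₂ y ∂m →
      (transferOp ζ inv)^[n] (g₁ - g₂)
        = (coneStep m ζ inv ξ)^[n] g₁ - (coneStep m ζ inv ξ)^[n] g₂ := by
  induction n with
  | zero => simp
  | succ n ih =>
    intro g₁ g₂ h₁ h₂ hint₁ hint₂ heq
    have hstep : transferOp ζ inv (g₁ - g₂)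
        = coneStep m ζ inv ξ g₁ - coneStep m ζ inv ξ g₂ := by
      rw [transferOp_sub (hF.summable_transferOp_term hdiam hdual hR h₁ hint₁)
        (hF.summable_transferOp_term hdiam hdual hR h₂ hint₂)]
      ext y
      simp only [coneStep, Pi.sub_apply, heq]
      ring
    rw [Function.iterate_succ_apply, Function.iterate_succ_apply, Function.iterate_succ_apply,
      hstep]
    exact ih (hF.coneStep_mem_holderCone hdiam hdual hR hξ hξe hRξ h₁ hint₁)
      (hF.coneStep_mem_holderCone hdiam hdual hR hξ hξe hRξ h₂ hint₂)
      (hF.integrable_coneStep hdiam hdual hR h₁ hint₁)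
      (hF.integrable_coneStep hdiam hdual hR h₂ hint₂)
      (by rw [hF.integral_coneStep hdiam hdual hR h₁ hint₁,
        hF.integral_coneStep hdiam hdual hR h₂ hint₂, heq])

end IsUniformlyExpanding

end

theorem uniformly_expanding_decay_general {Y : Type*} [MetricSpace Y] [MeasurableSpace Y]
    (m : Measure Y) [IsProbabilityMeasure m]
    (hdiam : ∀ x y : Y, dist x y ≤ 1)
    {ι : Type*} (A : ι → Set Y)
    (F : Y → Y) (inv : ι → Y → Y)
    (hinv_mem : ∀ i y, inv i y ∈ A i)
    (hinv_right : ∀ i y, F (inv i y) = y)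
    (ζ : Y → ℝ) (hζ : ∀ x, 0 < ζ x)
    (Λ K η R ξ : ℝ) (hΛ : 1 < Λ) (hK : 0 < K) (hη : η ∈ Set.Ioc (0:ℝ) 1)
    (hR : 0 < R) (hξ : ξ ∈ Set.Ioo 0 (Real.exp (-R)))
    (hRξ : K + Λ ^ (-η) * R ≤ R * (1 - ξ * Real.exp R))
    (hexp : ∀ i, ∀ x ∈ A i, ∀ y ∈ A i, Λ * dist x y ≤ dist (F x) (F y))
    (hdist : ∀ i, ∀ x ∈ A i, ∀ y ∈ A i,
      |Real.log (ζ x) - Real.log (ζ y)| ≤ K * dist (F x) (F y) ^ η)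
    (Pm : (Y → ℝ) → Y → ℝ)
    (hPm : ∀ (φ : Y → ℝ) (y : Y), Pm φ y = ∑' i, ζ (inv i y) * φ (inv i y))
    (hdual : ∀ φ : Y → ℝ, Integrable φ m → ∫ y, Pm φ y ∂m = ∫ y, φ y ∂m)
    (φ : Y → ℝ) (Hφ : ℝ) (hHφ : 0 ≤ Hφ)
    (hφ : ∀ x y : Y, |φ x - φ y| ≤ Hφ * dist x y ^ η)
    (hφint : Integrable φ m) (hmean : ∫ y, φ y ∂m = 0) :
    ∀ n : ℕ, 1 ≤ n → ∀ x z w : Y, z ≠ w →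
      |(Pm^[n] φ) x| + |(Pm^[n] φ) z - (Pm^[n] φ) w| / dist z w ^ η
        ≤ 4 * Real.exp R * (1 + R) * (1 - ξ) ^ n * Hφ := by
  intro n _ x z w hzw
  obtain rfl : Pm = transferOp ζ inv := funext fun ψ => funext (hPm ψ)
  have hF : IsUniformlyExpanding F A inv ζ Λ K η :=
    ⟨hinv_mem, hinv_right, hζ, hΛ, hK.le, hη, hexp, hdist⟩
  set b := Hφ + Hφ / R
  have h₁ := add_const_mem_holderCone hR hHφ hφ
    (abs_le_of_holder_of_integral_eq_zero hdiam hη.1.le hHφ hφ hφint hmean)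
  have h₂ := const_mem_holderCone (Y := Y) (η := η) (by positivity : 0 ≤ b) hR.le
  have hint₁ : Integrable (fun u => φ u + b) m := hφint.add (integrable_const b)
  have hmass : ∫ u, φ u + b ∂m = ∫ _u, b ∂m := by
    rw [integral_add hφint (integrable_const b), hmean, zero_add]
  have hiter := hF.iterate_transferOp_sub hdiam hdual hR.le hξ.1.le hξ.2.le hRξ n h₁ h₂
    hint₁ (integrable_const b) hmass
  obtain ⟨hc₁, hi₁, hI₁⟩ :=
    hF.iterate_coneStep_mem_holderCone hdiam hdual hR.le hξ.1.le hξ.2.le hRξ h₁ hint₁ n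
  obtain ⟨hc₂, hi₂, hI₂⟩ := hF.iterate_coneStep_mem_holderCone hdiam hdual hR.le hξ.1.le
    hξ.2.le hRξ h₂ (integrable_const b) n
  rw [show φ = (fun u => φ u + b) - fun _ => b by ext; simp, hiter]
  calc _ ≤ 4 * R * exp R * ((1 - ξ) ^ n * ∫ u, φ u + b ∂m) := by
        rw [← hI₁]
        exact abs_sub_add_div_rpow_dist_le_of_mem_holderCone hdiam hη.1.le hR.le hc₁ hc₂
          hi₁ hi₂ (by rw [hI₁, hI₂, hmass]) hzw
    _ = 4 * Real.exp R * (1 + R) * (1 - ξ) ^ n * Hφ := by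
        rw [hmass, integral_const, probReal_univ, one_smul]
        simp only [b]
        field_simp
        ring

/-- Theorem 2.1 (with explicit constants): `‖P_m^n φ‖_η ≤ C γ^n |φ|_η` with
`γ = 1-ξ` and `C = 4 e^R (1+R)`, for every Hölder `φ` of mean zero, where
`‖ψ‖_η = |ψ|_∞ + |ψ|_η` is expressed pointwise. -/
theorem uniformly_expanding_decay {Y : Type*} [MetricSpace Y] [MeasurableSpace Y]
    (m : Measure Y) [IsProbabilityMeasure m]
    (hdiam : ∀ x y : Y, dist x y ≤ 1)
    {ι : Type*} [Countable ι] (A : ι → Set Y)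
    (F : Y → Y) (inv : ι → Y → Y)
    (hinv_mem : ∀ i y, inv i y ∈ A i)
    (hinv_right : ∀ i y, F (inv i y) = y)
    (hinv_left : ∀ i, ∀ x ∈ A i, inv i (F x) = x)
    (ζ : Y → ℝ) (hζ : ∀ x, 0 < ζ x)
    (Λ K η R ξ : ℝ) (hΛ : 1 < Λ) (hK : 0 < K) (hη : η ∈ Set.Ioc (0:ℝ) 1)
    (hR : 0 < R) (hξ : ξ ∈ Set.Ioo 0 (Real.exp (-R)))
    (hRξ : K + Λ ^ (-η) * R ≤ R * (1 - ξ * Real.exp R))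
    (hexp : ∀ i, ∀ x ∈ A i, ∀ y ∈ A i, Λ * dist x y ≤ dist (F x) (F y))
    (hdist : ∀ i, ∀ x ∈ A i, ∀ y ∈ A i,
      |Real.log (ζ x) - Real.log (ζ y)| ≤ K * dist (F x) (F y) ^ η)
    (Pm : (Y → ℝ) → Y → ℝ)
    (hPm : ∀ (φ : Y → ℝ) (y : Y), Pm φ y = ∑' i, ζ (inv i y) * φ (inv i y))
    (hdual : ∀ φ : Y → ℝ, Integrable φ m → ∫ y, Pm φ y ∂m = ∫ y, φ y ∂m)
    (φ : Y → ℝ) (Hφ : ℝ) (hHφ : 0 ≤ Hφ)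
    (hφ : ∀ x y : Y, |φ x - φ y| ≤ Hφ * dist x y ^ η)
    (hφint : Integrable φ m) (hmean : ∫ y, φ y ∂m = 0) :
    ∀ n : ℕ, 1 ≤ n → ∀ x z w : Y, z ≠ w →
      |(Pm^[n] φ) x| + |(Pm^[n] φ) z - (Pm^[n] φ) w| / dist z w ^ η
        ≤ 4 * Real.exp R * (1 + R) * (1 - ξ) ^ n * Hφ :=
  uniformly_expanding_decay_general m hdiam A F inv hinv_mem hinv_right ζ hζ Λ K η R ξ hΛ hK hη hR
    hξ hRξ hexp hdist Pm hPm hdual φ Hφ hHφ hφ hφint hmean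
end

section
/- In the uniformly expanding setting with constants $\lambda, K, \eta$ and $R$ chosen so that $R(1-\xi e^R) \ge K + \lambda^{-\eta}R$ for some $\xi \in (0,e^{-R})$: the limit $\rho = \lim_{n\to\infty} P_m^n 1$ exists in the H\"older norm $\|\cdot\|_\eta$, satisfies $\int_Y \rho\,dm = 1$, $P_m\rho = \rho$, $e^{-R} \le \rho \le e^R$, and $|\log\rho(x) - \log\rho(y)| \le R\, d(x,y)^\eta$ for all $x,y \in Y$. In particular $d\mu = \rho\,dm$ defines an $F$-invariant probability measure equivalent to $m$. -/
/-!
Let `C` be the set of probability densities `φ > 0` whose logarithm is `η`-Hölder with constant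
`R`. As `diam Y ≤ 1`, every `φ ∈ C` takes values in `[e^{-R}, e^R]`. The transfer operator maps
`C` to densities with log-Hölder constant `K + Λ^{-η} R ≤ R (1 - ξ e^R)`, and this margin is what
keeps `ψ = (P φ - ξ) / (1 - ξ)` in `C`. So `P φ = ξ + (1 - ξ) ψ` with `ψ ∈ C`, and by linearity
`P^n f - P^n g = (1 - ξ)^n (f' - g')` with `f', g' ∈ C`. Hence `P^n 1` converges in the Hölder
norm at rate `(1 - ξ)^n` to some `ρ ∈ C`, and `ρ` is fixed by `P`, which is continuous for uniform
convergence.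
-/

open MeasureTheory Filter Set Real Topology

theorem log_sub_log_le_iff {a b c : ℝ} (ha : 0 < a) (hb : 0 < b) :
    log a - log b ≤ c ↔ a ≤ exp c * b := by
  rw [sub_le_iff_le_add, ← log_exp c, ← log_mul (exp_ne_zero c) hb.ne', log_exp,
    log_le_log_iff ha (by positivity)]

theorem sub_le_mul_log_sub_log {a b : ℝ} (ha : 0 < a) (hb : 0 < b) :
    a - b ≤ a * (log a - log b) := by
  have h := one_sub_inv_le_log_of_pos (div_pos ha hb)
  rw [inv_div, log_div ha.ne' hb.ne'] at h
  calc a - b = a * (1 - b / a) := by field_simp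
    _ ≤ a * (log a - log b) := mul_le_mul_of_nonneg_left h ha.le

theorem log_sub_sub_log_sub_mul_le {ξ t a b : ℝ} (hξ : 0 ≤ ξ) (hξt : ξ < t) (htb : t ≤ b)
    (hba : b ≤ a) : (log (a - ξ) - log (b - ξ)) * (1 - ξ / t) ≤ log a - log b := by
  have ht : 0 < t := hξ.trans_lt hξt
  set f : ℝ → ℝ := fun u => (1 - ξ / t) * log (u - ξ) - log u
  have hderiv : ∀ u ∈ Ici t, HasDerivAt f ((1 - ξ / t) * (u - ξ)⁻¹ - u⁻¹) u := fun u hu =>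
    (((hasDerivAt_id u).sub_const ξ).log (sub_pos.2 (hξt.trans_le hu)).ne').const_mul _
      |>.sub (hasDerivAt_log (ht.trans_le hu).ne') |>.congr_deriv (by simp)
  have hanti : AntitoneOn f (Ici t) := by
    refine antitoneOn_of_hasDerivWithinAt_nonpos (convex_Ici t)
      (fun u hu => (hderiv u hu).continuousAt.continuousWithinAt)
      (fun u hu => (hderiv u (interior_subset hu)).hasDerivWithinAt) fun u hu => ?_
    have hu : t < u := by rwa [interior_Ici] at hu
    have huξ : 0 < u - ξ := by linarith
    rw [sub_nonpos, ← div_eq_mul_inv, div_le_iff₀ huξ, inv_mul_eq_div, le_div_iff₀ (by linarith),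
      sub_mul, one_mul, div_mul_eq_mul_div, sub_le_sub_iff_left, le_div_iff₀ ht]
    exact mul_le_mul_of_nonneg_left hu.le hξ
  have := hanti htb (htb.trans hba) hba
  simp only [f] at this
  linarith

theorem abs_sub_le_of_forall_sub_le {Y : Type*} [PseudoMetricSpace Y] {f : Y → ℝ} {c η : ℝ}
    (h : ∀ y z, f y - f z ≤ c * dist y z ^ η) (y z : Y) : |f y - f z| ≤ c * dist y z ^ η :=
  abs_sub_le_iff.2 ⟨h y z, dist_comm z y ▸ h z y⟩

structure IsLogHolderDensity {Y : Type*} [MetricSpace Y] [MeasurableSpace Y] (m : Measure Y)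
    (R η : ℝ) (φ : Y → ℝ) : Prop where
  pos : ∀ x, 0 < φ x
  abs_log_sub_le : ∀ x y, |log (φ x) - log (φ y)| ≤ R * dist x y ^ η
  integrable : Integrable φ m
  integral_eq_one : ∫ y, φ y ∂m = 1

namespace IsLogHolderDensity

variable {Y : Type*} [MetricSpace Y] [MeasurableSpace Y] {m : Measure Y} {R η : ℝ} {φ : Y → ℝ}

theorem le_exp_mul (hdiam : ∀ x y : Y, dist x y ≤ 1) (hR : 0 ≤ R) (hη : 0 ≤ η)
    (hφ : IsLogHolderDensity m R η φ) (x y : Y) : φ x ≤ exp R * φ y := by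
  rw [← log_sub_log_le_iff (hφ.pos x) (hφ.pos y)]
  calc log (φ x) - log (φ y) ≤ R * dist x y ^ η := (abs_le.1 (hφ.abs_log_sub_le x y)).2
    _ ≤ R * 1 := mul_le_mul_of_nonneg_left (rpow_le_one dist_nonneg (hdiam x y) hη) hR
    _ = R := mul_one R

variable [IsProbabilityMeasure m]

theorem one (hR : 0 ≤ R) (η : ℝ) : IsLogHolderDensity m R η 1 where
  pos _ := one_pos
  abs_log_sub_le x y := by
    simp only [Pi.one_apply, log_one, sub_self, abs_zero]
    positivity
  integrable := integrable_const 1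
  integral_eq_one := by simp

theorem le_exp (hdiam : ∀ x y : Y, dist x y ≤ 1) (hR : 0 ≤ R) (hη : 0 ≤ η)
    (hφ : IsLogHolderDensity m R η φ) (x : Y) : φ x ≤ exp R :=
  calc φ x = ∫ _, φ x ∂m := by simp
    _ ≤ ∫ y, exp R * φ y ∂m := integral_mono (integrable_const _) (hφ.integrable.const_mul _)
        (hφ.le_exp_mul hdiam hR hη x)
    _ = exp R := by rw [integral_const_mul, hφ.integral_eq_one, mul_one]

theorem exp_neg_le (hdiam : ∀ x y : Y, dist x y ≤ 1) (hR : 0 ≤ R) (hη : 0 ≤ η)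
    (hφ : IsLogHolderDensity m R η φ) (x : Y) : exp (-R) ≤ φ x := by
  have h : 1 ≤ exp R * φ x :=
    calc 1 = ∫ y, φ y ∂m := hφ.integral_eq_one.symm
      _ ≤ ∫ _, exp R * φ x ∂m := integral_mono hφ.integrable (integrable_const _)
          fun y => hφ.le_exp_mul hdiam hR hη y x
      _ = exp R * φ x := by simp
  rwa [exp_neg, inv_le_iff_one_le_mul₀ (exp_pos R), mul_comm]

theorem abs_le_exp (hdiam : ∀ x y : Y, dist x y ≤ 1) (hR : 0 ≤ R) (hη : 0 ≤ η)
    (hφ : IsLogHolderDensity m R η φ) (x : Y) : |φ x| ≤ exp R := by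
  rw [abs_of_pos (hφ.pos x)]; exact hφ.le_exp hdiam hR hη x

theorem abs_sub_le (hdiam : ∀ x y : Y, dist x y ≤ 1) (hR : 0 ≤ R) (hη : 0 ≤ η)
    (hφ : IsLogHolderDensity m R η φ) (z w : Y) :
    |φ z - φ w| ≤ exp R * R * dist z w ^ η := by
  refine abs_sub_le_of_forall_sub_le (fun z w => ?_) z w
  calc φ z - φ w ≤ φ z * (log (φ z) - log (φ w)) := sub_le_mul_log_sub_log (hφ.pos z) (hφ.pos w)
    _ ≤ φ z * (R * dist z w ^ η) :=
        mul_le_mul_of_nonneg_left (abs_le.1 (hφ.abs_log_sub_le z w)).2 (hφ.pos z).le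
    _ ≤ exp R * (R * dist z w ^ η) :=
        mul_le_mul_of_nonneg_right (hφ.le_exp hdiam hR hη z) (by positivity)
    _ = exp R * R * dist z w ^ η := (mul_assoc _ _ _).symm

theorem of_tendsto (hdiam : ∀ x y : Y, dist x y ≤ 1) (hR : 0 ≤ R) (hη : 0 ≤ η)
    {f : ℕ → Y → ℝ} {ρ : Y → ℝ} (hf : ∀ n, IsLogHolderDensity m R η (f n))
    (hlim : ∀ x, Tendsto (fun n => f n x) atTop (𝓝 (ρ x))) : IsLogHolderDensity m R η ρ := by
  have hpos : ∀ x, 0 < ρ x := fun x => (exp_pos (-R)).trans_le <|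
    ge_of_tendsto (hlim x) (Eventually.of_forall fun n => (hf n).exp_neg_le hdiam hR hη x)
  have hmeas : AEStronglyMeasurable ρ m :=
    aestronglyMeasurable_of_tendsto_ae atTop (fun n => (hf n).integrable.aestronglyMeasurable)
      (Eventually.of_forall hlim)
  have hbound : ∀ n, ∀ᵐ x ∂m, ‖f n x‖ ≤ exp R := fun n =>
    Eventually.of_forall ((hf n).abs_le_exp hdiam hR hη)
  refine ⟨hpos, fun x y => ?_, ?_, ?_⟩
  · have hlog : ∀ x, Tendsto (fun n => log (f n x)) atTop (𝓝 (log (ρ x))) := fun x =>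
      ((continuousAt_log (hpos x).ne').tendsto).comp (hlim x)
    exact le_of_tendsto ((hlog x).sub (hlog y)).abs
      (Eventually.of_forall fun n => (hf n).abs_log_sub_le x y)
  · refine (integrable_const (exp R)).mono' hmeas (Eventually.of_forall fun x => ?_)
    exact le_of_tendsto (hlim x).norm
      (Eventually.of_forall fun n => (hf n).abs_le_exp hdiam hR hη x)
  · refine tendsto_nhds_unique (tendsto_integral_of_dominated_convergence _
      (fun n => (hf n).integrable.aestronglyMeasurable) (integrable_const _) hbound
      (Eventually.of_forall hlim)) ?_
    simp only [fun n => (hf n).integral_eq_one, tendsto_const_nhds]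

theorem sub_div (hdiam : ∀ x y : Y, dist x y ≤ 1) (hR : 0 ≤ R) (hη : 0 ≤ η)
    {ξ : ℝ} (hξ : 0 ≤ ξ) (hξR : ξ < exp (-R)) (hφ : IsLogHolderDensity m R η φ)
    (hφlog : ∀ x y, log (φ x) - log (φ y) ≤ R * (1 - ξ * exp R) * dist x y ^ η) :
    IsLogHolderDensity m R η fun x => (φ x - ξ) / (1 - ξ) := by
  have hlow := hφ.exp_neg_le hdiam hR hη
  have hsub : ∀ x, 0 < φ x - ξ := fun x => sub_pos.2 (hξR.trans_le (hlow x))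
  have hξ1 : 0 < 1 - ξ := sub_pos.2 (hξR.trans_le (exp_le_one_iff.2 (neg_nonpos.2 hR)))
  have hq : 0 < 1 - ξ * exp R := by
    have := mul_lt_mul_of_pos_right hξR (exp_pos R)
    rw [← exp_add, neg_add_cancel, exp_zero] at this
    linarith
  have hlog_sub : ∀ x y, log (φ x - ξ) - log (φ y - ξ) ≤ R * dist x y ^ η := by
    intro x y
    rcases le_total (φ y) (φ x) with hyx | hxy
    · refine le_of_mul_le_mul_right ?_ hq
      have key := log_sub_sub_log_sub_mul_le hξ hξR (hlow y) hyx
      rw [div_eq_mul_inv, ← exp_neg, neg_neg] at key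
      linarith [hφlog x y]
    · have : log (φ x - ξ) ≤ log (φ y - ξ) := log_le_log (hsub x) (by linarith)
      linarith [show 0 ≤ R * dist x y ^ η by positivity]
  refine ⟨fun x => div_pos (hsub x) hξ1, fun x y => ?_,
    (hφ.integrable.sub (integrable_const ξ)).div_const _, ?_⟩
  · rw [log_div (hsub x).ne' hξ1.ne', log_div (hsub y).ne' hξ1.ne', sub_sub_sub_cancel_right]
    exact abs_sub_le_of_forall_sub_le hlog_sub x y
  · rw [integral_div, integral_sub hφ.integrable (integrable_const ξ), hφ.integral_eq_one]
    simp [div_self hξ1.ne']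

end IsLogHolderDensity

structure HasDoeblinSplitting {Y : Type*} (P : (Y → ℝ) → Y → ℝ) (C : Set (Y → ℝ)) (ξ : ℝ) :
    Prop where
  mapsTo : MapsTo P C C
  one_mem : 1 ∈ C
  map_add_smul : ∀ f ∈ C, ∀ h ∈ C, ∀ a b : ℝ, P (a • f + b • h) = a • P f + b • P h
  exists_split : ∀ f ∈ C, ∃ ψ ∈ C, P f = ξ • 1 + (1 - ξ) • ψ

namespace HasDoeblinSplitting

section

variable {Y : Type*} {P : (Y → ℝ) → Y → ℝ} {C : Set (Y → ℝ)} {ξ : ℝ}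

theorem iterate_map_add_smul (hD : HasDoeblinSplitting P C ξ) (n : ℕ) :
    ∀ f ∈ C, ∀ h ∈ C, ∀ a b : ℝ, P^[n] (a • f + b • h) = a • P^[n] f + b • P^[n] h := by
  induction n with
  | zero => intro f _ h _ a b; rfl
  | succ n ih =>
    intro f hf h hh a b
    simp only [Function.iterate_succ_apply]
    rw [hD.map_add_smul f hf h hh, ih _ (hD.mapsTo hf) _ (hD.mapsTo hh)]

theorem exists_iterate_sub_eq (hD : HasDoeblinSplitting P C ξ) (n : ℕ) :
    ∀ f ∈ C, ∀ h ∈ C, ∃ f' ∈ C, ∃ h' ∈ C, P^[n] f - P^[n] h = (1 - ξ) ^ n • (f' - h') := by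
  induction n with
  | zero => intro f hf h hh; exact ⟨f, hf, h, hh, by simp⟩
  | succ n ih =>
    intro f hf h hh
    obtain ⟨ψf, hψf, hPf⟩ := hD.exists_split f hf
    obtain ⟨ψh, hψh, hPh⟩ := hD.exists_split h hh
    obtain ⟨f', hf', h', hh', heq⟩ := ih ψf hψf ψh hψh
    refine ⟨f', hf', h', hh', ?_⟩
    rw [Function.iterate_succ_apply, Function.iterate_succ_apply, hPf, hPh,
      hD.iterate_map_add_smul n 1 hD.one_mem ψf hψf, hD.iterate_map_add_smul n 1 hD.one_mem ψh hψh,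
      pow_succ', mul_smul, ← heq, smul_sub]
    abel

end

variable {Y : Type*} [MetricSpace Y] [MeasurableSpace Y] {m : Measure Y}
  [IsProbabilityMeasure m] {P : (Y → ℝ) → Y → ℝ} {R η ξ : ℝ}

theorem abs_iterate_sub_le (hD : HasDoeblinSplitting P {φ | IsLogHolderDensity m R η φ} ξ)
    (hdiam : ∀ x y : Y, dist x y ≤ 1) (hR : 0 ≤ R) (hη : 0 ≤ η) (hξ : ξ ≤ 1)
    {f h : Y → ℝ} (hf : IsLogHolderDensity m R η f) (hh : IsLogHolderDensity m R η h)
    (n : ℕ) (x : Y) : |P^[n] f x - P^[n] h x| ≤ (1 - ξ) ^ n * exp R := by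
  obtain ⟨f', hf', h', hh', heq⟩ := hD.exists_iterate_sub_eq n f hf h hh
  have hx := congr_fun heq x
  simp only [Pi.sub_apply, Pi.smul_apply, smul_eq_mul] at hx
  rw [hx, abs_mul, abs_of_nonneg (pow_nonneg (sub_nonneg.2 hξ) n)]
  gcongr
  exact abs_sub_le_of_nonneg_of_le (hf'.pos x).le (hf'.le_exp hdiam hR hη x)
    (hh'.pos x).le (hh'.le_exp hdiam hR hη x)

theorem abs_iterate_sub_sub_le (hD : HasDoeblinSplitting P {φ | IsLogHolderDensity m R η φ} ξ)
    (hdiam : ∀ x y : Y, dist x y ≤ 1) (hR : 0 ≤ R) (hη : 0 ≤ η) (hξ : ξ ≤ 1)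
    {f h : Y → ℝ} (hf : IsLogHolderDensity m R η f) (hh : IsLogHolderDensity m R η h)
    (n : ℕ) (z w : Y) :
    |(P^[n] f z - P^[n] h z) - (P^[n] f w - P^[n] h w)| ≤
      (1 - ξ) ^ n * (2 * exp R * R) * dist z w ^ η := by
  obtain ⟨f', hf', h', hh', heq⟩ := hD.exists_iterate_sub_eq n f hf h hh
  have hz := congr_fun heq z
  have hw := congr_fun heq w
  simp only [Pi.sub_apply, Pi.smul_apply, smul_eq_mul] at hz hw
  rw [hz, hw, ← mul_sub, abs_mul, abs_of_nonneg (pow_nonneg (sub_nonneg.2 hξ) n), mul_assoc]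
  gcongr
  calc |f' z - h' z - (f' w - h' w)| = |(f' z - f' w) - (h' z - h' w)| := by ring_nf
    _ ≤ |f' z - f' w| + |h' z - h' w| := abs_sub _ _
    _ ≤ exp R * R * dist z w ^ η + exp R * R * dist z w ^ η :=
        add_le_add (hf'.abs_sub_le hdiam hR hη z w) (hh'.abs_sub_le hdiam hR hη z w)
    _ = 2 * exp R * R * dist z w ^ η := by ring

theorem exists_tendsto_iterate_one (hD : HasDoeblinSplitting P {φ | IsLogHolderDensity m R η φ} ξ)
    (hdiam : ∀ x y : Y, dist x y ≤ 1) (hR : 0 ≤ R) (hη : 0 ≤ η) (hξ0 : 0 < ξ) (hξ1 : ξ ≤ 1) :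
    ∃ ρ, IsLogHolderDensity m R η ρ ∧ ∀ n,
      (∀ x, |P^[n] 1 x - ρ x| ≤ (1 - ξ) ^ n * exp R) ∧
      ∀ z w, |(P^[n] 1 z - ρ z) - (P^[n] 1 w - ρ w)| ≤
        (1 - ξ) ^ n * (2 * exp R * R) * dist z w ^ η := by
  have hmem : ∀ n, IsLogHolderDensity m R η (P^[n] 1) := fun n => hD.mapsTo.iterate n hD.one_mem
  have hcauchy : ∀ x, CauchySeq fun n => P^[n] 1 x := fun x =>
    cauchySeq_of_le_geometric (1 - ξ) (exp R) (by linarith) fun n => by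
      rw [Real.dist_eq, Function.iterate_succ_apply, mul_comm]
      exact hD.abs_iterate_sub_le hdiam hR hη hξ1 hD.one_mem (hD.mapsTo hD.one_mem) n x
  choose ρ hρ using fun x => cauchySeq_tendsto_of_complete (hcauchy x)
  have hshift : ∀ n x, Tendsto (fun k => P^[n] (P^[k] 1) x) atTop (𝓝 (ρ x)) := fun n x => by
    simpa only [← Function.iterate_add_apply, add_comm n, Function.comp_def] using
      (hρ x).comp (tendsto_add_atTop_nat n)
  refine ⟨ρ, IsLogHolderDensity.of_tendsto hdiam hR hη hmem hρ, fun n =>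
    ⟨fun x => le_of_tendsto ((hshift n x).const_sub _).abs (Eventually.of_forall fun k => ?_),
      fun z w => le_of_tendsto (((hshift n z).const_sub _).sub ((hshift n w).const_sub _)).abs
        (Eventually.of_forall fun k => ?_)⟩⟩
  · exact hD.abs_iterate_sub_le hdiam hR hη hξ1 hD.one_mem (hmem k) n x
  · exact hD.abs_iterate_sub_sub_le hdiam hR hη hξ1 hD.one_mem (hmem k) n z w

end HasDoeblinSplitting

/-- `g i` are the inverse branches of the map and `w i = ζ ∘ g i` their weights. -/
structure IsTransferOperator {Y ι : Type*} [MetricSpace Y] (P : (Y → ℝ) → Y → ℝ)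
    (w : ι → Y → ℝ) (g : ι → Y → Y) (K Λ η : ℝ) : Prop where
  apply_eq : ∀ φ y, P φ y = ∑' i, w i y * φ (g i y)
  weight_pos : ∀ i y, 0 < w i y
  summable_weight : ∀ y, Summable fun i => w i y
  log_weight_sub_le : ∀ i y z, log (w i y) - log (w i z) ≤ K * dist y z ^ η
  branch_lipschitz : ∀ i y z, Λ * dist (g i y) (g i z) ≤ dist y z

theorem summable_of_log_sub_le_of_tsum_ne_zero {ι Y : Type*} {w : ι → Y → ℝ} {K : ℝ}
    (hw : ∀ i y, 0 < w i y) (hlog : ∀ i y z, log (w i y) - log (w i z) ≤ K) {y₀ : Y}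
    (hy₀ : ∑' i, w i y₀ ≠ 0) (y : Y) : Summable fun i => w i y := by
  have hsum₀ : Summable fun i => w i y₀ := by
    by_contra hs; exact hy₀ (tsum_eq_zero_of_not_summable hs)
  exact Summable.of_nonneg_of_le (fun i => (hw i y).le)
    (fun i => (log_sub_log_le_iff (hw i y) (hw i y₀)).1 (hlog i y y₀)) (hsum₀.mul_left (exp K))

namespace IsTransferOperator

variable {Y ι : Type*} [MetricSpace Y] {P : (Y → ℝ) → Y → ℝ} {w : ι → Y → ℝ} {g : ι → Y → Y}
  {K Λ η : ℝ} {f h : Y → ℝ} {B B' : ℝ}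

theorem of_inverse_branches {A : ι → Set Y} {F : Y → Y} {inv : ι → Y → Y} {ζ : Y → ℝ}
    (hdiam : ∀ x y : Y, dist x y ≤ 1) (hK : 0 ≤ K) (hη : 0 ≤ η)
    (hinv_mem : ∀ i y, inv i y ∈ A i) (hinv_right : ∀ i y, F (inv i y) = y)
    (hζ : ∀ x, 0 < ζ x) (hexp : ∀ i, ∀ x ∈ A i, ∀ y ∈ A i, Λ * dist x y ≤ dist (F x) (F y))
    (hdist : ∀ i, ∀ x ∈ A i, ∀ y ∈ A i, |log (ζ x) - log (ζ y)| ≤ K * dist (F x) (F y) ^ η)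
    (hP : ∀ φ y, P φ y = ∑' i, ζ (inv i y) * φ (inv i y)) {y₀ : Y} (hy₀ : P 1 y₀ ≠ 0) :
    IsTransferOperator P (fun i y => ζ (inv i y)) inv K Λ η := by
  have hlog : ∀ i y z, log (ζ (inv i y)) - log (ζ (inv i z)) ≤ K * dist y z ^ η := fun i y z => by
    simpa only [hinv_right] using (abs_le.1 (hdist i _ (hinv_mem i y) _ (hinv_mem i z))).2
  refine ⟨hP, fun i y => hζ _, fun y => ?_, hlog, fun i y z => ?_⟩
  · refine summable_of_log_sub_le_of_tsum_ne_zero (K := K) (fun i y => hζ _) (fun i y z => ?_)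
      (by simpa only [hP, Pi.one_apply, mul_one] using hy₀) y
    exact (hlog i y z).trans (mul_le_of_le_one_right hK (rpow_le_one dist_nonneg (hdiam y z) hη))
  · simpa only [hinv_right] using hexp i _ (hinv_mem i y) _ (hinv_mem i z)

theorem nonempty (hP : IsTransferOperator P w g K Λ η) {y : Y} (hy : P 1 y ≠ 0) : Nonempty ι := by
  by_contra hι
  rw [not_nonempty_iff] at hι
  exact hy (by rw [hP.apply_eq, tsum_empty])

theorem summable_mul (hP : IsTransferOperator P w g K Λ η) (hf : ∀ x, |f x| ≤ B) (y : Y) :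
    Summable fun i => w i y * f (g i y) :=
  ((hP.summable_weight y).mul_right B).of_norm_bounded fun i => by
    rw [norm_mul, Real.norm_of_nonneg (hP.weight_pos i y).le, Real.norm_eq_abs]
    exact mul_le_mul_of_nonneg_left (hf _) (hP.weight_pos i y).le

theorem map_add_smul (hP : IsTransferOperator P w g K Λ η) (hf : ∀ x, |f x| ≤ B)
    (hh : ∀ x, |h x| ≤ B') (a b : ℝ) : P (a • f + b • h) = a • P f + b • P h := by
  funext y
  simp only [hP.apply_eq, Pi.add_apply, Pi.smul_apply, smul_eq_mul, ← tsum_mul_left,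
    ← ((hP.summable_mul hf y).mul_left a).tsum_add ((hP.summable_mul hh y).mul_left b)]
  congr 1
  funext i
  ring

theorem abs_apply_sub_le (hP : IsTransferOperator P w g K Λ η) (hf : ∀ x, |f x| ≤ B)
    (hh : ∀ x, |h x| ≤ B') {δ : ℝ} (hδ : ∀ x, |f x - h x| ≤ δ) (y : Y) :
    |P f y - P h y| ≤ P 1 y * δ := by
  rw [hP.apply_eq f, hP.apply_eq h, hP.apply_eq 1, ← (hP.summable_mul hf y).tsum_sub
    (hP.summable_mul hh y), ← tsum_mul_right, ← Real.norm_eq_abs]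
  refine tsum_of_norm_bounded (((hP.summable_mul (B := 1) (by simp) y).mul_right δ).hasSum)
    fun i => ?_
  rw [← mul_sub, norm_mul, Real.norm_of_nonneg (hP.weight_pos i y).le, Real.norm_eq_abs,
    Pi.one_apply, mul_one]
  exact mul_le_mul_of_nonneg_left (hδ _) (hP.weight_pos i y).le

theorem apply_pos (hP : IsTransferOperator P w g K Λ η) [Nonempty ι] (hf : ∀ x, 0 < f x)
    (hB : ∀ x, |f x| ≤ B) (y : Y) : 0 < P f y := by
  obtain ⟨i⟩ := ‹Nonempty ι›
  rw [hP.apply_eq]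
  exact (hP.summable_mul hB y).tsum_pos (fun j => (mul_pos (hP.weight_pos j y) (hf _)).le) i
    (mul_pos (hP.weight_pos i y) (hf _))

theorem rpow_dist_branch_le (hP : IsTransferOperator P w g K Λ η) (hΛ : 0 < Λ) (hη : 0 ≤ η)
    (i : ι) (y z : Y) : dist (g i y) (g i z) ^ η ≤ Λ ^ (-η) * dist y z ^ η :=
  calc dist (g i y) (g i z) ^ η ≤ (Λ⁻¹ * dist y z) ^ η := by
        gcongr
        rw [inv_mul_eq_div, le_div_iff₀' hΛ]
        exact hP.branch_lipschitz i y z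
    _ = Λ ^ (-η) * dist y z ^ η := by
        rw [mul_rpow (inv_nonneg.2 hΛ.le) dist_nonneg, inv_rpow hΛ.le, rpow_neg hΛ.le]

theorem apply_le_exp_mul (hP : IsTransferOperator P w g K Λ η) (hΛ : 0 < Λ) (hη : 0 ≤ η)
    {R : ℝ} (hR : 0 ≤ R) (hf : ∀ x, 0 < f x)
    (hflog : ∀ x y, |log (f x) - log (f y)| ≤ R * dist x y ^ η) (hB : ∀ x, |f x| ≤ B) (y z : Y) :
    P f y ≤ exp ((K + Λ ^ (-η) * R) * dist y z ^ η) * P f z := by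
  have hterm : ∀ i, w i y * f (g i y) ≤
      exp ((K + Λ ^ (-η) * R) * dist y z ^ η) * (w i z * f (g i z)) := fun i => by
    rw [← log_sub_log_le_iff (mul_pos (hP.weight_pos i y) (hf _))
      (mul_pos (hP.weight_pos i z) (hf _)), log_mul (hP.weight_pos i y).ne' (hf _).ne',
      log_mul (hP.weight_pos i z).ne' (hf _).ne']
    have hbranch := mul_le_mul_of_nonneg_left (hP.rpow_dist_branch_le hΛ hη i y z) hR
    linarith [hP.log_weight_sub_le i y z, (abs_le.1 (hflog (g i y) (g i z))).2]
  rw [hP.apply_eq, hP.apply_eq, ← tsum_mul_left]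
  exact (hP.summable_mul hB y).tsum_le_tsum hterm ((hP.summable_mul hB z).mul_left _)

theorem abs_log_apply_sub_le (hP : IsTransferOperator P w g K Λ η) [Nonempty ι] (hΛ : 0 < Λ)
    (hη : 0 ≤ η) {R : ℝ} (hR : 0 ≤ R) (hf : ∀ x, 0 < f x)
    (hflog : ∀ x y, |log (f x) - log (f y)| ≤ R * dist x y ^ η) (hB : ∀ x, |f x| ≤ B) (y z : Y) :
    |log (P f y) - log (P f z)| ≤ (K + Λ ^ (-η) * R) * dist y z ^ η :=
  abs_sub_le_of_forall_sub_le (fun y z => (log_sub_log_le_iff (hP.apply_pos hf hB y)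
    (hP.apply_pos hf hB z)).2 (hP.apply_le_exp_mul hΛ hη hR hf hflog hB y z)) y z

theorem apply_eq_self_of_tendsto (hP : IsTransferOperator P w g K Λ η) {ρ : Y → ℝ} {B : ℝ}
    {δ : ℕ → ℝ} (hρ : ∀ x, |ρ x| ≤ B) (hB : ∀ n x, |P^[n] 1 x| ≤ B)
    (hδ : ∀ n x, |P^[n] 1 x - ρ x| ≤ δ n) (hδ0 : Tendsto δ atTop (𝓝 0)) : P ρ = ρ := by
  funext y
  have hlim : Tendsto (fun n => P^[n] 1 y) atTop (𝓝 (ρ y)) :=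
    tendsto_iff_dist_tendsto_zero.2 <| squeeze_zero (fun n => dist_nonneg)
      (fun n => (Real.dist_eq _ _).trans_le (hδ n y)) hδ0
  have happly : Tendsto (fun n => P (P^[n] 1) y) atTop (𝓝 (P ρ y)) :=
    tendsto_iff_dist_tendsto_zero.2 <| squeeze_zero (fun n => dist_nonneg)
      (fun n => (Real.dist_eq _ _).trans_le (hP.abs_apply_sub_le (hB n) hρ (hδ n) y))
      (by simpa using hδ0.const_mul (P 1 y))
  refine tendsto_nhds_unique happly ?_
  simpa only [Function.comp_def, Function.iterate_succ_apply'] using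
    hlim.comp (tendsto_add_atTop_nat 1)

variable [MeasurableSpace Y] {m : Measure Y} [IsProbabilityMeasure m] {R : ℝ}

theorem mapsTo_isLogHolderDensity (hP : IsTransferOperator P w g K Λ η) [Nonempty ι]
    (hdual : ∀ φ : Y → ℝ, Integrable φ m → ∫ y, P φ y ∂m = ∫ y, φ y ∂m)
    (hdiam : ∀ x y : Y, dist x y ≤ 1) (hΛ : 0 < Λ) (hη : 0 ≤ η) (hR : 0 ≤ R)
    (hKR : K + Λ ^ (-η) * R ≤ R) :
    MapsTo P {φ | IsLogHolderDensity m R η φ} {φ | IsLogHolderDensity m R η φ} := fun f hf => by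
  have hB := hf.abs_le_exp hdiam hR hη
  have hint : ∫ y, P f y ∂m = 1 := (hdual f hf.integrable).trans hf.integral_eq_one
  refine ⟨hP.apply_pos hf.pos hB, fun y z => ?_, .of_integral_ne_zero (by simp [hint]), hint⟩
  exact (hP.abs_log_apply_sub_le hΛ hη hR hf.pos hf.abs_log_sub_le hB y z).trans
    (mul_le_mul_of_nonneg_right hKR (by positivity))

theorem hasDoeblinSplitting (hP : IsTransferOperator P w g K Λ η) [Nonempty ι]
    (hdual : ∀ φ : Y → ℝ, Integrable φ m → ∫ y, P φ y ∂m = ∫ y, φ y ∂m)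
    (hdiam : ∀ x y : Y, dist x y ≤ 1) (hΛ : 0 < Λ) (hη : 0 ≤ η) (hR : 0 ≤ R) {ξ : ℝ}
    (hξ : 0 ≤ ξ) (hξR : ξ < exp (-R)) (hKR : K + Λ ^ (-η) * R ≤ R * (1 - ξ * exp R)) :
    HasDoeblinSplitting P {φ | IsLogHolderDensity m R η φ} ξ := by
  have hmaps := hP.mapsTo_isLogHolderDensity hdual hdiam hΛ hη hR
    (hKR.trans (mul_le_of_le_one_right hR (by have := mul_nonneg hξ (exp_pos R).le; linarith)))
  have hξ1 : 1 - ξ ≠ 0 := (sub_pos.2 (hξR.trans_le (exp_le_one_iff.2 (by linarith)))).ne'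
  refine ⟨hmaps, IsLogHolderDensity.one hR η, fun f hf h hh => hP.map_add_smul
    (hf.abs_le_exp hdiam hR hη) (hh.abs_le_exp hdiam hR hη), fun f hf =>
    ⟨fun x => (P f x - ξ) / (1 - ξ), ?_, ?_⟩⟩
  · refine (hmaps hf).sub_div hdiam hR hη hξ hξR fun y z => ?_
    exact (abs_le.1 (hP.abs_log_apply_sub_le hΛ hη hR hf.pos hf.abs_log_sub_le
      (hf.abs_le_exp hdiam hR hη) y z)).2.trans
      (mul_le_mul_of_nonneg_right hKR (by positivity))
  · funext x
    simp only [Pi.add_apply, Pi.smul_apply, Pi.one_apply, smul_eq_mul]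
    field_simp
    ring

end IsTransferOperator

theorem invariant_density_exists_general {Y : Type*} [MetricSpace Y] [MeasurableSpace Y]
    (m : Measure Y) [IsProbabilityMeasure m]
    (hdiam : ∀ x y : Y, dist x y ≤ 1)
    {ι : Type*} (A : ι → Set Y)
    (F : Y → Y) (inv : ι → Y → Y)
    (hinv_mem : ∀ i y, inv i y ∈ A i)
    (hinv_right : ∀ i y, F (inv i y) = y)
    (ζ : Y → ℝ) (hζ : ∀ x, 0 < ζ x)
    (Λ K η R ξ : ℝ) (hΛ : 1 < Λ) (hK : 0 < K) (hη : η ∈ Set.Ioc (0:ℝ) 1)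
    (hR : 0 < R) (hξ : ξ ∈ Set.Ioo 0 (Real.exp (-R)))
    (hRξ : K + Λ ^ (-η) * R ≤ R * (1 - ξ * Real.exp R))
    (hexp : ∀ i, ∀ x ∈ A i, ∀ y ∈ A i, Λ * dist x y ≤ dist (F x) (F y))
    (hdist : ∀ i, ∀ x ∈ A i, ∀ y ∈ A i,
      |Real.log (ζ x) - Real.log (ζ y)| ≤ K * dist (F x) (F y) ^ η)
    (Pm : (Y → ℝ) → Y → ℝ)
    (hPm : ∀ (φ : Y → ℝ) (y : Y), Pm φ y = ∑' i, ζ (inv i y) * φ (inv i y))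
    (hdual : ∀ φ : Y → ℝ, Integrable φ m → ∫ y, Pm φ y ∂m = ∫ y, φ y ∂m) :
    ∃ ρ : Y → ℝ,
      (∀ x, 0 < ρ x) ∧ Integrable ρ m ∧ (∫ y, ρ y ∂m = 1) ∧
      (∀ y, Pm ρ y = ρ y) ∧
      (∀ x, Real.exp (-R) ≤ ρ x ∧ ρ x ≤ Real.exp R) ∧
      (∀ x y : Y, |Real.log (ρ x) - Real.log (ρ y)| ≤ R * dist x y ^ η) ∧
      (∀ ε > (0:ℝ), ∃ N : ℕ, ∀ n ≥ N, ∀ x z w : Y, z ≠ w →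
        |(Pm^[n] (fun _ => 1)) x - ρ x| +
          |((Pm^[n] (fun _ => 1)) z - ρ z) - ((Pm^[n] (fun _ => 1)) w - ρ w)|
            / dist z w ^ η ≤ ε) := by
  obtain ⟨hη0, -⟩ := hη
  obtain ⟨hξ0, hξR⟩ := hξ
  obtain ⟨y₀, hy₀⟩ : ∃ y, Pm 1 y ≠ 0 :=
    exists_ne_zero_of_integral_ne_zero (μ := m) (by simp [hdual 1 (integrable_const 1)])
  have hP := IsTransferOperator.of_inverse_branches hdiam hK.le hη0.le hinv_mem hinv_right hζ
    hexp hdist hPm hy₀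
  have := hP.nonempty hy₀
  have hD := hP.hasDoeblinSplitting hdual hdiam (by linarith) hη0.le hR.le hξ0.le hξR hRξ
  have hξ1 : ξ < 1 := hξR.trans (exp_lt_one_iff.2 (by linarith))
  have hγ := tendsto_pow_atTop_nhds_zero_of_lt_one (sub_nonneg.2 hξ1.le) (sub_lt_self 1 hξ0)
  obtain ⟨ρ, hρ, hrate⟩ := hD.exists_tendsto_iterate_one hdiam hR.le hη0.le hξ0 hξ1.le
  have hfix := hP.apply_eq_self_of_tendsto (hρ.abs_le_exp hdiam hR.le hη0.le)
    (fun n => (hD.mapsTo.iterate n hD.one_mem).abs_le_exp hdiam hR.le hη0.le)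
    (fun n => (hrate n).1) (by simpa using hγ.mul_const (exp R))
  refine ⟨ρ, hρ.pos, hρ.integrable, hρ.integral_eq_one, congr_fun hfix, fun x =>
    ⟨hρ.exp_neg_le hdiam hR.le hη0.le x, hρ.le_exp hdiam hR.le hη0.le x⟩, hρ.abs_log_sub_le, ?_⟩
  intro ε hε
  obtain ⟨N, hN⟩ := eventually_atTop.1 ((hγ.mul_const (exp R + 2 * exp R * R)).eventually
    (ge_mem_nhds (by simpa using hε)))
  refine ⟨N, fun n hn x z w hzw => ?_⟩
  have hholder := (div_le_iff₀ (rpow_pos_of_pos (dist_pos.2 hzw) η)).2 ((hrate n).2 z w)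
  calc _ ≤ (1 - ξ) ^ n * exp R + (1 - ξ) ^ n * (2 * exp R * R) := add_le_add ((hrate n).1 x) hholder
    _ = (1 - ξ) ^ n * (exp R + 2 * exp R * R) := by ring
    _ ≤ ε := hN n hn

/-- Proposition 2.4: the invariant density `ρ = lim_n P_m^n 1` exists (in the
Hölder norm), satisfies `∫ ρ dm = 1`, `P_m ρ = ρ`, `e^{-R} ≤ ρ ≤ e^R` and
`|log ρ|_η ≤ R`; in particular `dμ = ρ dm` is an `F`-invariant probability
measure equivalent to `m`. -/
theorem invariant_density_exists {Y : Type*} [MetricSpace Y] [MeasurableSpace Y]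
    (m : Measure Y) [IsProbabilityMeasure m]
    (hdiam : ∀ x y : Y, dist x y ≤ 1)
    {ι : Type*} [Countable ι] (A : ι → Set Y)
    (F : Y → Y) (inv : ι → Y → Y)
    (hinv_mem : ∀ i y, inv i y ∈ A i)
    (hinv_right : ∀ i y, F (inv i y) = y)
    (hinv_left : ∀ i, ∀ x ∈ A i, inv i (F x) = x)
    (ζ : Y → ℝ) (hζ : ∀ x, 0 < ζ x)
    (Λ K η R ξ : ℝ) (hΛ : 1 < Λ) (hK : 0 < K) (hη : η ∈ Set.Ioc (0:ℝ) 1)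
    (hR : 0 < R) (hξ : ξ ∈ Set.Ioo 0 (Real.exp (-R)))
    (hRξ : K + Λ ^ (-η) * R ≤ R * (1 - ξ * Real.exp R))
    (hexp : ∀ i, ∀ x ∈ A i, ∀ y ∈ A i, Λ * dist x y ≤ dist (F x) (F y))
    (hdist : ∀ i, ∀ x ∈ A i, ∀ y ∈ A i,
      |Real.log (ζ x) - Real.log (ζ y)| ≤ K * dist (F x) (F y) ^ η)
    (Pm : (Y → ℝ) → Y → ℝ)
    (hPm : ∀ (φ : Y → ℝ) (y : Y), Pm φ y = ∑' i, ζ (inv i y) * φ (inv i y))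
    (hdual : ∀ φ : Y → ℝ, Integrable φ m → ∫ y, Pm φ y ∂m = ∫ y, φ y ∂m) :
    ∃ ρ : Y → ℝ,
      (∀ x, 0 < ρ x) ∧ Integrable ρ m ∧ (∫ y, ρ y ∂m = 1) ∧
      (∀ y, Pm ρ y = ρ y) ∧
      (∀ x, Real.exp (-R) ≤ ρ x ∧ ρ x ≤ Real.exp R) ∧
      (∀ x y : Y, |Real.log (ρ x) - Real.log (ρ y)| ≤ R * dist x y ^ η) ∧
      (∀ ε > (0:ℝ), ∃ N : ℕ, ∀ n ≥ N, ∀ x z w : Y, z ≠ w →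
        |(Pm^[n] (fun _ => 1)) x - ρ x| +
          |((Pm^[n] (fun _ => 1)) z - ρ z) - ((Pm^[n] (fun _ => 1)) w - ρ w)|
            / dist z w ^ η ≤ ε) :=
  invariant_density_exists_general m hdiam A F inv hinv_mem hinv_right ζ hζ Λ K η R ξ hΛ hK hη hR hξ
    hRξ hexp hdist Pm hPm hdual
end

section
/- Let $\{I_1, \dots, I_r\}$ be positive integers with $\gcd\{I_1,\dots,I_r\} = 1$, and let $N_1 = \max_k I_k^2$. Then every integer $n \ge N_1$ can be written as $n = \sum_{k=1}^r n_k I_k$ with nonnegative integers $n_k$. -/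
/-- Bezout identity for a `Finset` gcd of natural numbers. -/
theorem nsb_bezout (r : ℕ) (I : Fin r → ℕ) (s : Finset (Fin r)) :
    ∃ x : Fin r → ℤ, ((s.gcd I : ℕ) : ℤ) = ∑ k ∈ s, x k * I k := by
  induction s using Finset.induction with
  | empty => exact ⟨0, by simp⟩
  | @insert a s ha ih =>
    obtain ⟨x, hx⟩ := ih
    refine ⟨fun k => if k = a then Nat.gcdA (I a) (s.gcd I) else Nat.gcdB (I a) (s.gcd I) * x k, ?_⟩
    rw [Finset.gcd_insert, Finset.sum_insert ha]
    have hg : GCDMonoid.gcd (I a) (s.gcd I) = Nat.gcd (I a) (s.gcd I) := rfl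
    have hb := Nat.gcd_eq_gcd_ab (I a) (s.gcd I)
    rw [hg, hb]
    beta_reduce
    rw [Finset.sum_congr rfl (fun k hk => by rw [if_neg (by rintro rfl; exact ha hk)])]
    rw [if_pos rfl]
    simp only [mul_assoc]
    rw [← Finset.mul_sum, ← hx]
    ring

/-- Sum of a mapped list as a sum over counts. -/
theorem nsb_sum_count (r : ℕ) (f : Fin r → ℕ) (L : List (Fin r)) :
    (L.map f).sum = ∑ k, L.count k * f k := by
  induction L with
  | nil => simp
  | cons a L ih =>
    simp only [List.map_cons, List.sum_cons, ih, List.count_cons, beq_iff_eq, add_mul,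
      Finset.sum_add_distrib, ite_mul, one_mul, zero_mul, Finset.sum_ite_eq,
      Finset.mem_univ, if_true]
    ring

/-- Shrinking lemma: any list of indices can be replaced by one of length `< m`
with the same sum of images in `ZMod m`. -/
theorem nsb_shrink (m : ℕ) [NeZero m] (r : ℕ) (g : Fin r → ZMod m) :
    ∀ N (L : List (Fin r)), L.length ≤ N →
      ∃ L' : List (Fin r), L'.length < m ∧ (L'.map g).sum = (L.map g).sum := by
  intro N
  induction N with
  | zero =>
    intro L hL
    exact ⟨L, by have := NeZero.pos m; omega, rfl⟩
  | succ N ih =>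
    intro L hL
    by_cases h : L.length < m
    · exact ⟨L, h, rfl⟩
    push_neg at h
    obtain ⟨i, j, hij, hFij⟩ := Fintype.exists_ne_map_eq_of_card_lt
      (fun i : Fin (m + 1) => ((L.take i).map g).sum)
      (by simp [ZMod.card])
    have key : ∀ i j : Fin (m + 1), (i : ℕ) < (j : ℕ) →
        ((L.take (i : ℕ)).map g).sum = ((L.take (j : ℕ)).map g).sum →
        ∃ L' : List (Fin r), L'.length < m ∧ (L'.map g).sum = (L.map g).sum := by
      intro i j hlt hq
      have hjm : (j : ℕ) ≤ m := by omega
      have hjle : (j : ℕ) ≤ L.length := le_trans hjm h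
      set L' : List (Fin r) := L.take i ++ L.drop j with hL'
      have hlen : L'.length ≤ N := by
        have : L'.length = min (i : ℕ) L.length + (L.length - j) := by
          simp [hL']
        omega
      obtain ⟨L'', h1, h2⟩ := ih L' hlen
      refine ⟨L'', h1, ?_⟩
      rw [h2]
      calc (L'.map g).sum = ((L.take (i : ℕ)).map g).sum + ((L.drop (j : ℕ)).map g).sum := by
            simp [hL']
        _ = ((L.take (j : ℕ)).map g).sum + ((L.drop (j : ℕ)).map g).sum := by rw [hq]
        _ = (L.map g).sum := by
            rw [← List.sum_append, ← List.map_append, List.take_append_drop]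
    rcases lt_or_gt_of_ne (fun h' : (i : ℕ) = (j : ℕ) => hij (Fin.ext h')) with hlt | hlt
    · exact key i j hlt hFij
    · exact key j i hlt hFij.symm

/-- Numerical semigroup bound: if `I₁, …, I_r` are positive integers with
`gcd = 1`, then every integer `n ≥ max_k I_k ^ 2` is a nonnegative integer
combination `n = ∑ n_k I_k`. -/
theorem numerical_semigroup_bound (r : ℕ) (hr : 0 < r)
    (I : Fin r → ℕ) (hI : ∀ k, 0 < I k)
    (hgcd : Finset.univ.gcd I = 1)
    (n : ℕ) (hn : (Finset.univ.sup I) ^ 2 ≤ n) :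
    ∃ c : Fin r → ℕ, n = ∑ k, c k * I k := by
  haveI : Nonempty (Fin r) := ⟨⟨0, hr⟩⟩
  set m : ℕ := Finset.univ.sup I with hmdef
  obtain ⟨k0, -, hk0⟩ := Finset.exists_mem_eq_sup Finset.univ Finset.univ_nonempty I
  have hm : 0 < m := by rw [hmdef, hk0]; exact hI k0
  haveI : NeZero m := ⟨hm.ne'⟩
  -- Bezout
  obtain ⟨x, hx⟩ := nsb_bezout r I Finset.univ
  rw [hgcd] at hx
  -- initial coefficients, reduced mod m
  set d : Fin r → ℕ := fun k => ((n * x k) % m).toNat with hd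
  set g : Fin r → ZMod m := fun k => ((I k : ℕ) : ZMod m) with hg
  set L0 : List (Fin r) := (List.finRange r).flatMap (fun k => List.replicate (d k) k) with hL0
  have hdsum : ((L0.map g).sum : ZMod m) = (n : ZMod m) := by
    have h1 : (L0.map g).sum = ∑ k, (d k : ZMod m) * g k := by
      rw [hL0, List.map_flatMap, List.flatMap, List.sum_flatten, List.map_map,
        Fin.sum_univ_def]
      apply congrArg
      apply List.map_congr_left
      intro k _
      simp only [Function.comp, List.map_replicate, List.sum_replicate, nsmul_eq_mul]
    have h2 : ∀ k, ((d k : ℕ) : ZMod m) = ((n * x k : ℤ) : ZMod m) := by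
      intro k
      have h3 : ((d k : ℕ) : ℤ) = (n * x k) % m :=
        Int.toNat_of_nonneg (Int.emod_nonneg _ (by exact_mod_cast hm.ne'))
      have h4 : (((d k : ℕ) : ℤ) : ZMod m) = ((d k : ℕ) : ZMod m) := by push_cast; ring
      rw [← h4, h3, ZMod.intCast_eq_intCast_iff]
      exact Int.emod_emod_of_dvd _ dvd_rfl
    have h5 : (n : ℤ) = ∑ k, ((n : ℤ) * x k) * (I k : ℤ) := by
      calc (n : ℤ) = (n : ℤ) * ((1 : ℕ) : ℤ) := by push_cast; ring
        _ = (n : ℤ) * ∑ k, x k * (I k : ℤ) := by rw [← hx]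
        _ = ∑ k, ((n : ℤ) * x k) * (I k : ℤ) := by
            rw [Finset.mul_sum]; exact Finset.sum_congr rfl fun k _ => by ring
    have h6 : ((n : ℕ) : ZMod m) = ∑ k, ((n * x k : ℤ) : ZMod m) * ((I k : ℕ) : ZMod m) := by
      calc ((n : ℕ) : ZMod m) = (((n : ℤ) : ℤ) : ZMod m) := by push_cast; ring
        _ = ((∑ k, ((n : ℤ) * x k) * (I k : ℤ) : ℤ) : ZMod m) := by rw [← h5]
        _ = ∑ k, ((n * x k : ℤ) : ZMod m) * ((I k : ℕ) : ZMod m) := by push_cast; ring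
    rw [h1, h6]
    exact Finset.sum_congr rfl fun k _ => by rw [← h2 k]
  -- shrink
  obtain ⟨L, hLlen, hLsum⟩ := nsb_shrink m r g L0.length L0 le_rfl
  rw [hdsum] at hLsum
  set S : ℕ := (L.map I).sum with hS
  have hScast : ((S : ℕ) : ZMod m) = (n : ZMod m) := by
    rw [hS, Nat.cast_list_sum, List.map_map, ← hLsum]
    rfl
  have hSle : S ≤ L.length * m := by
    have := List.sum_le_card_nsmul (L.map I) m (by
      intro y hy
      obtain ⟨k, -, rfl⟩ := List.mem_map.mp hy
      exact Finset.le_sup (Finset.mem_univ k))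
    simpa using this
  have hSn : S ≤ n := by
    have h7 : (m - 1) * m < m * m := mul_lt_mul_of_pos_right (by omega) hm
    have h8 : m ^ 2 = m * m := sq m
    have h9 : L.length * m ≤ (m - 1) * m := Nat.mul_le_mul_right m (by omega)
    have h10 : S < m * m := lt_of_le_of_lt (le_trans hSle h9) h7
    omega
  have hmod : S ≡ n [MOD m] := (ZMod.natCast_eq_natCast_iff _ _ _).mp hScast
  obtain ⟨q, hq⟩ := (Nat.modEq_iff_dvd' hSn).mp hmod
  have hnq : n = m * q + S := (Nat.sub_eq_iff_eq_add hSn).mp hq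
  refine ⟨fun k => L.count k + if k = k0 then q else 0, ?_⟩
  have hsum : ∑ k, (L.count k + if k = k0 then q else 0) * I k
      = S + q * I k0 := by
    simp only [add_mul, Finset.sum_add_distrib]
    rw [hS, nsb_sum_count]
    congr 1
    rw [Finset.sum_congr rfl (fun k _ => by
      show (if k = k0 then q else 0) * I k = if k = k0 then q * I k else 0
      split <;> simp)]
    rw [Finset.sum_ite_eq' Finset.univ k0 (fun k => q * I k), if_pos (Finset.mem_univ k0)]
  rw [hsum, show I k0 = m from hk0.symm, hnq]
  ring
end

section
/- Let $(p_j)_{j\ge 0}$ and $(q_j)_{j\ge 0}$ be sequences of nonnegative reals with $\sum_{j=0}^\infty p_j = \sum_{j=0}^\infty q_j < \infty$ and $\sum_{j=0}^k q_j \ge \sum_{j=0}^k p_j$ for every $k \ge 0$. Then there exist numbers $s_{k,j} \in [0,1]$ for $0 \le j \le k$ such that $\sum_{j=0}^k s_{k,j} q_j = p_k$ for every $k \ge 0$ and $\sum_{k=j}^\infty s_{k,j} = 1$ for every $j \ge 0$. -/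
/-!
Lay the masses out on the half-line: `p k` as the interval `[P k, P (k + 1)]` and `q j` as
`[Q j, Q (j + 1)]`, where `P`, `Q` are the partial sums. Take `s k j * q j` to be the length of
the overlap of these two intervals. The `k`-th `p`-interval is covered by the first `k + 1`
`q`-intervals because `P (k + 1) ≤ Q (k + 1)`, so row `k` sums to `p k`; since `P` increases to
`∑ q`, the `p`-intervals together cover every `q`-interval, so column `j` sums to `q j`.
-/

open Finset Filter Topology

/-- For `a ≤ a'` and `b ≤ b'`, the length of `[a, a'] ∩ [b, b']`. -/
def overlap (a a' b b' : ℝ) : ℝ :=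
  (min a' b' - min a b') - (min a' b - min a b)

namespace overlap

variable {a a' b b' : ℝ}

theorem comm (a a' b b' : ℝ) : overlap a a' b b' = overlap b b' a a' := by
  simp only [overlap, min_comm]; ring

theorem nonneg (ha : a ≤ a') (hb : b ≤ b') : 0 ≤ overlap a a' b b' := by
  simp only [overlap, min_def]; split_ifs <;> linarith

theorem le_sub_right (hb : b ≤ b') : overlap a a' b b' ≤ b' - b := by
  simp only [overlap, min_def]; split_ifs <;> linarith

theorem eq_zero_of_le (ha : a ≤ a') (hb : b ≤ b') (h : a' ≤ b) : overlap a a' b b' = 0 := by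
  simp only [overlap, min_def]; split_ifs <;> linarith

theorem eq_sub_of_le_of_le (ha : a ≤ a') (hb : b ≤ a) (hb' : a' ≤ b') :
    overlap a a' b b' = a' - a := by
  simp only [overlap, min_def]; split_ifs <;> linarith

theorem sum_range_right (a a' : ℝ) (Q : ℕ → ℝ) (n : ℕ) :
    ∑ j ∈ range n, overlap a a' (Q j) (Q (j + 1)) = overlap a a' (Q 0) (Q n) := by
  simpa only [overlap] using sum_range_sub (fun t => min a' (Q t) - min a (Q t)) n

theorem sum_range_left (P : ℕ → ℝ) (b b' : ℝ) (n : ℕ) :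
    ∑ k ∈ range n, overlap (P k) (P (k + 1)) b b' = overlap (P 0) (P n) b b' := by
  simpa only [overlap.comm _ _ b b'] using sum_range_right b b' P n

theorem continuous_right (a b b' : ℝ) : Continuous fun x => overlap a x b b' := by
  unfold overlap; fun_prop

end overlap

theorem monotone_sum_range_of_nonneg {p : ℕ → ℝ} (hp : ∀ i, 0 ≤ p i) :
    Monotone fun n => ∑ i ∈ range n, p i :=
  monotone_nat_of_le_succ fun n => by simpa [sum_range_succ] using hp n

theorem exists_normalized_columns (q : ℕ → ℝ) (m : ℕ → ℕ → ℝ) (hm : ∀ k j, 0 ≤ m k j)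
    (hmq : ∀ k j, m k j ≤ q j) (hcol : ∀ j, HasSum (fun i => m (j + i) j) (q j)) :
    ∃ s : ℕ → ℕ → ℝ, (∀ k j, s k j ∈ Set.Icc (0 : ℝ) 1) ∧ (∀ k j, s k j * q j = m k j) ∧
      ∀ j, HasSum (fun i => s (j + i) j) 1 := by
  -- an empty column `q j = 0` is sent entirely to the diagonal
  refine ⟨fun k j => if q j = 0 then if k = j then 1 else 0 else m k j / q j, ?_, ?_, ?_⟩
  · intro k j
    by_cases hqj : q j = 0
    · simp only [hqj, if_true]; split_ifs <;> norm_num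
    · have hqpos : 0 < q j := lt_of_le_of_ne ((hm k j).trans (hmq k j)) (Ne.symm hqj)
      simp only [hqj, if_false]
      exact ⟨div_nonneg (hm k j) hqpos.le, div_le_one_of_le₀ (hmq k j) hqpos.le⟩
  · intro k j
    by_cases hqj : q j = 0
    · simp [hqj, le_antisymm (hqj ▸ hmq k j) (hm k j)]
    · simp [hqj, div_mul_cancel₀ _ hqj]
  · intro j
    by_cases hqj : q j = 0
    · simpa [hqj] using hasSum_ite_eq 0 (1 : ℝ)
    · simpa [hqj, div_self hqj] using (hcol j).div_const (q j)

section Staircase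

variable {P Q : ℕ → ℝ}

theorem sum_range_succ_overlap_staircase (hP : Monotone P) (hPQ : ∀ n, P n ≤ Q n)
    (h0 : Q 0 ≤ P 0) (k : ℕ) :
    ∑ j ∈ range (k + 1), overlap (P k) (P (k + 1)) (Q j) (Q (j + 1)) = P (k + 1) - P k := by
  rw [overlap.sum_range_right]
  exact overlap.eq_sub_of_le_of_le (hP k.le_succ) (h0.trans (hP k.zero_le)) (hPQ _)

theorem hasSum_overlap_staircase (hP : Monotone P) (hQ : Monotone Q) (hPQ : ∀ n, P n ≤ Q n)
    {L : ℝ} (hPL : Tendsto P atTop (𝓝 L)) (hQL : ∀ n, Q n ≤ L) (j : ℕ) :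
    HasSum (fun i => overlap (P (j + i)) (P (j + i + 1)) (Q j) (Q (j + 1))) (Q (j + 1) - Q j) := by
  have hfull : HasSum (fun k => overlap (P k) (P (k + 1)) (Q j) (Q (j + 1))) (Q (j + 1) - Q j) := by
    rw [hasSum_iff_tendsto_nat_of_nonneg
      (fun k => overlap.nonneg (hP k.le_succ) (hQ j.le_succ))]
    simp only [overlap.sum_range_left]
    have hlim : overlap (P 0) L (Q j) (Q (j + 1)) = Q (j + 1) - Q j := by
      rw [overlap.comm]
      exact overlap.eq_sub_of_le_of_le (hQ j.le_succ) ((hPQ 0).trans (hQ j.zero_le)) (hQL _)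
    exact hlim ▸ ((overlap.continuous_right _ _ _).tendsto L).comp hPL
  -- the intervals `[P k, P (k + 1)]` with `k < j` lie below `Q j`
  have hbelow : ∀ k ∈ range j, overlap (P k) (P (k + 1)) (Q j) (Q (j + 1)) = 0 := fun k hk =>
    overlap.eq_zero_of_le (hP k.le_succ) (hQ j.le_succ) ((hPQ _).trans (hQ (mem_range.1 hk)))
  have hshift := (hasSum_nat_add_iff' j).mpr hfull
  rw [sum_eq_zero hbelow, sub_zero] at hshift
  simpa only [add_comm j] using hshift

end Staircase

/-- Mass redistribution lemma (Proposition 4.8): given nonnegative summable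
sequences `p, q` with equal total mass and `∑_{j ≤ k} p_j ≤ ∑_{j ≤ k} q_j` for
every `k`, there exist `s_{k,j} ∈ [0,1]` (`0 ≤ j ≤ k`) with
`∑_{j=0}^k s_{k,j} q_j = p_k` for all `k` and `∑_{k ≥ j} s_{k,j} = 1` for all `j`. -/
theorem mass_redistribution (p q : ℕ → ℝ)
    (hp : ∀ j, 0 ≤ p j) (hq : ∀ j, 0 ≤ q j)
    (hps : Summable p) (hqs : Summable q)
    (heq : ∑' j, p j = ∑' j, q j)
    (hpart : ∀ k, ∑ j ∈ Finset.range (k + 1), p j ≤ ∑ j ∈ Finset.range (k + 1), q j) :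
    ∃ s : ℕ → ℕ → ℝ,
      (∀ k j, j ≤ k → s k j ∈ Set.Icc (0:ℝ) 1) ∧
      (∀ k, ∑ j ∈ Finset.range (k + 1), s k j * q j = p k) ∧
      (∀ j, HasSum (fun i : ℕ => s (j + i) j) 1) := by
  set P : ℕ → ℝ := fun n => ∑ i ∈ range n, p i
  set Q : ℕ → ℝ := fun n => ∑ i ∈ range n, q i
  have hP : Monotone P := monotone_sum_range_of_nonneg hp
  have hQ : Monotone Q := monotone_sum_range_of_nonneg hq
  have hPQ : ∀ n, P n ≤ Q n := by
    rintro (_ | k)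
    · simp [P, Q]
    · exact hpart k
  have hPL : Tendsto P atTop (𝓝 (∑' j, q j)) := heq ▸ hps.hasSum.tendsto_sum_nat
  have hQL : ∀ n, Q n ≤ ∑' j, q j := fun n => hqs.sum_le_tsum _ fun i _ => hq i
  have hq_eq : ∀ j, Q (j + 1) - Q j = q j := fun j => sum_range_succ_sub_sum q
  obtain ⟨s, hs, hsq, hscol⟩ := exists_normalized_columns q
    (fun k j => overlap (P k) (P (k + 1)) (Q j) (Q (j + 1)))
    (fun k j => overlap.nonneg (hP k.le_succ) (hQ j.le_succ))
    (fun k j => hq_eq j ▸ overlap.le_sub_right (hQ j.le_succ))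
    (fun j => hq_eq j ▸ hasSum_overlap_staircase hP hQ hPQ hPL hQL j)
  refine ⟨s, fun k j _ => hs k j, fun k => ?_, hscol⟩
  simp only [hsq]
  rw [sum_range_succ_overlap_staircase hP hPQ le_rfl]
  exact sum_range_succ_sub_sum p
end

section
/- Let $X_1, \dots, X_k$ be nonnegative random variables, and suppose there exist $C \ge 0$, $\alpha > 0$, $\gamma \in (0,1]$ such that $\mathbb{P}(X_j \ge t \mid X_1 = x_1, \dots, X_{j-1} = x_{j-1}) \le C e^{-\alpha t^\gamma}$ for all $t \ge 0$, $1 \le j \le k$, and all $x_1,\dots,x_{j-1} \ge 0$. Then for every $\beta \in (0, \alpha/2]$ and $t \ge 0$, $\mathbb{P}(X_1 + \cdots + X_k \ge t) \le (1 + \beta C_1)^k e^{-\beta t^\gamma}$, where $C_1 = C\gamma \int_0^\infty s^{\gamma-1} e^{-\alpha s^\gamma/2}\,ds$. -/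
open MeasureTheory Real Set

/-!
Since `γ ≤ 1`, `(∑ X_j)^γ ≤ ∑ X_j^γ`, so by Markov's inequality it suffices to show
`𝔼 exp(β ∑ X_j^γ) ≤ (1 + β C₁)^k`. Peel off the last variable `Y = X_k` and let
`g = exp(β ∑_{j<k} X_j^γ)`, a function of the earlier variables. The layer-cake formula
`exp(β Y^γ) - 1 = ∫₀^Y βγ s^(γ-1) e^(β s^γ) ds` and the conditional tail bound for the
weighted measure `g μ` give `𝔼[g exp(β Y^γ)] ≤ (1 + β C₁) 𝔼 g`; the integral converges
because `e^(-α s^γ) e^(β s^γ) ≤ e^(-α s^γ / 2)` for `β ≤ α / 2`.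
-/

lemma rpow_sum_le_sum_rpow {ι : Type*} (s : Finset ι) {f : ι → ℝ} (hf : ∀ i ∈ s, 0 ≤ f i)
    {γ : ℝ} (hγ0 : 0 < γ) (hγ1 : γ ≤ 1) :
    (∑ i ∈ s, f i) ^ γ ≤ ∑ i ∈ s, f i ^ γ :=
  Finset.le_sum_of_subadditive_on_pred (· ^ γ) (0 ≤ ·) (zero_rpow hγ0.ne').le
    (fun _ _ hx hy => rpow_add_le_add_rpow hx hy hγ0.le hγ1) (fun _ _ => add_nonneg) f hf

lemma intervalIntegrable_mul_rpow_mul_exp_mul_rpow (β : ℝ) {γ : ℝ} (hγ : 0 < γ) (a b : ℝ) :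
    IntervalIntegrable (fun s : ℝ => β * γ * s ^ (γ - 1) * exp (β * s ^ γ)) volume a b :=
  ((intervalIntegral.intervalIntegrable_rpow' (by linarith)).const_mul (β * γ)).mul_continuousOn
    (by fun_prop (disch := exact hγ.le))

lemma exp_mul_rpow_sub_one_eq_integral (β : ℝ) {γ x : ℝ} (hγ : 0 < γ) (hx : 0 ≤ x) :
    exp (β * x ^ γ) - 1 = ∫ s in (0 : ℝ)..x, β * γ * s ^ (γ - 1) * exp (β * s ^ γ) := by
  have hcont : Continuous fun s : ℝ => exp (β * s ^ γ) := by
    fun_prop (disch := exact hγ.le)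
  have hderiv : ∀ s ∈ Ioo 0 x,
      HasDerivAt (fun s : ℝ => exp (β * s ^ γ)) (β * γ * s ^ (γ - 1) * exp (β * s ^ γ)) s := by
    intro s hs
    convert ((hasDerivAt_rpow_const (Or.inl hs.1.ne')).const_mul β).exp using 1
    ring
  rw [intervalIntegral.integral_eq_sub_of_hasDerivAt_of_le hx hcont.continuousOn hderiv
      (intervalIntegrable_mul_rpow_mul_exp_mul_rpow β hγ 0 x),
    zero_rpow hγ.ne', mul_zero, exp_zero]

noncomputable def tailConstant (C α γ : ℝ) : ℝ :=
  C * γ * ∫ s in Ioi (0 : ℝ), s ^ (γ - 1) * exp (-α * s ^ γ / 2)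

lemma tailConstant_nonneg {C α γ : ℝ} (hC : 0 ≤ C) (hγ : 0 ≤ γ) : 0 ≤ tailConstant C α γ :=
  mul_nonneg (mul_nonneg hC hγ) <| setIntegral_nonneg measurableSet_Ioi fun _ hs =>
    mul_nonneg (rpow_nonneg (le_of_lt hs) _) (exp_nonneg _)

lemma one_add_mul_tailConstant_nonneg {C α β γ : ℝ} (hC : 0 ≤ C) (hγ : 0 ≤ γ) (hβ : 0 ≤ β) :
    0 ≤ 1 + β * tailConstant C α γ :=
  add_nonneg zero_le_one (mul_nonneg hβ (tailConstant_nonneg hC hγ))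

lemma integrableOn_rpow_mul_exp_neg_mul_rpow_div_two {α γ : ℝ} (hα : 0 < α) (hγ : 0 < γ) :
    IntegrableOn (fun s : ℝ => s ^ (γ - 1) * exp (-α * s ^ γ / 2)) (Ioi 0) := by
  simpa only [neg_mul, neg_div, mul_div_right_comm] using
    integrableOn_rpow_mul_exp_neg_mul_rpow (by linarith) hγ (half_pos hα)

lemma mul_exp_neg_mul_rpow_le {C α β γ s : ℝ} (hC : 0 ≤ C) (hγ : 0 ≤ γ) (hβ0 : 0 ≤ β)
    (hβ : β ≤ α / 2) (hs : 0 ≤ s) :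
    C * exp (-α * s ^ γ) * (β * γ * s ^ (γ - 1) * exp (β * s ^ γ))
      ≤ β * C * γ * (s ^ (γ - 1) * exp (-α * s ^ γ / 2)) := by
  have hsγ : 0 ≤ s ^ γ := rpow_nonneg hs _
  have hexp : exp (-α * s ^ γ) * exp (β * s ^ γ) ≤ exp (-α * s ^ γ / 2) := by
    rw [← exp_add]
    exact exp_le_exp.2 (by nlinarith)
  calc C * exp (-α * s ^ γ) * (β * γ * s ^ (γ - 1) * exp (β * s ^ γ))
      = β * C * γ * s ^ (γ - 1) * (exp (-α * s ^ γ) * exp (β * s ^ γ)) := by ring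
    _ ≤ β * C * γ * s ^ (γ - 1) * exp (-α * s ^ γ / 2) := by gcongr
    _ = β * C * γ * (s ^ (γ - 1) * exp (-α * s ^ γ / 2)) := by ring

lemma lintegral_exp_mul_rpow_le {Ω : Type*} [MeasurableSpace Ω] {ν : Measure Ω} {Y : Ω → ℝ}
    (hYm : Measurable Y) (hY : ∀ ω, 0 ≤ Y ω) {C α β γ : ℝ} (hC : 0 ≤ C) (hα : 0 < α)
    (hγ : 0 < γ) (hβ0 : 0 ≤ β) (hβ : β ≤ α / 2)
    (htail : ∀ s, 0 < s → ν {ω | s ≤ Y ω} ≤ ENNReal.ofReal (C * exp (-α * s ^ γ)) * ν univ) :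
    ∫⁻ ω, ENNReal.ofReal (exp (β * Y ω ^ γ)) ∂ν
      ≤ ENNReal.ofReal (1 + β * tailConstant C α γ) * ν univ := by
  set ρ : ℝ → ℝ := fun s => β * γ * s ^ (γ - 1) * exp (β * s ^ γ)
  set dom : ℝ → ℝ := fun s => β * C * γ * (s ^ (γ - 1) * exp (-α * s ^ γ / 2))
  have hρ : ∀ s, 0 < s → 0 ≤ ρ s := fun s hs => by positivity
  have hlayer : ∫⁻ ω, ENNReal.ofReal (exp (β * Y ω ^ γ) - 1) ∂ν
      = ∫⁻ s in Ioi 0, ν {ω | s ≤ Y ω} * ENNReal.ofReal (ρ s) := by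
    simp_rw [exp_mul_rpow_sub_one_eq_integral β hγ (hY _)]
    exact lintegral_comp_eq_lintegral_meas_le_mul ν (ae_of_all _ hY) hYm.aemeasurable
      (fun x _ => intervalIntegrable_mul_rpow_mul_exp_mul_rpow β hγ 0 x)
      ((ae_restrict_iff' measurableSet_Ioi).2 (ae_of_all _ hρ))
  have hdom : ∫⁻ s in Ioi 0, ENNReal.ofReal (dom s) = ENNReal.ofReal (β * tailConstant C α γ) := by
    rw [← ofReal_integral_eq_lintegral_ofReal
      ((integrableOn_rpow_mul_exp_neg_mul_rpow_div_two hα hγ).const_mul _)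
      ((ae_restrict_iff' measurableSet_Ioi).2 (ae_of_all _ fun s (hs : 0 < s) => by positivity)),
      integral_const_mul, tailConstant]
    ring_nf
  have hsplit : ∀ ω, ENNReal.ofReal (exp (β * Y ω ^ γ))
      = 1 + ENNReal.ofReal (exp (β * Y ω ^ γ) - 1) := fun ω => by
    rw [← ENNReal.ofReal_one, ← ENNReal.ofReal_add zero_le_one, add_sub_cancel]
    linarith [one_le_exp (mul_nonneg hβ0 (rpow_nonneg (hY ω) γ))]
  calc ∫⁻ ω, ENNReal.ofReal (exp (β * Y ω ^ γ)) ∂ν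
      = ν univ + ∫⁻ s in Ioi 0, ν {ω | s ≤ Y ω} * ENNReal.ofReal (ρ s) := by
        simp_rw [hsplit]
        rw [lintegral_add_left measurable_const, lintegral_one, hlayer]
    _ ≤ ν univ + ∫⁻ s in Ioi 0, ν univ * ENNReal.ofReal (dom s) := by
        gcongr ν univ + ?_
        refine setLIntegral_mono' measurableSet_Ioi fun s hs => ?_
        calc ν {ω | s ≤ Y ω} * ENNReal.ofReal (ρ s)
            ≤ ENNReal.ofReal (C * exp (-α * s ^ γ)) * ν univ * ENNReal.ofReal (ρ s) := by
              gcongr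
              exact htail s hs
          _ = ν univ * ENNReal.ofReal (C * exp (-α * s ^ γ) * ρ s) := by
              rw [ENNReal.ofReal_mul (mul_nonneg hC (exp_nonneg _))]
              ring
          _ ≤ ν univ * ENNReal.ofReal (dom s) := by
              gcongr
              exact mul_exp_neg_mul_rpow_le hC hγ.le hβ0 hβ (le_of_lt hs)
    _ = ENNReal.ofReal (1 + β * tailConstant C α γ) * ν univ := by
        rw [lintegral_const_mul _ (by fun_prop), hdom,
          ENNReal.ofReal_add zero_le_one
            (mul_nonneg hβ0 (tailConstant_nonneg hC hγ.le)), ENNReal.ofReal_one]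
        ring

lemma integrable_mul_exp_mul_rpow_and_integral_le {Ω : Type*} [MeasurableSpace Ω]
    {μ : Measure Ω} {g Y : Ω → ℝ} (hgm : Measurable g) (hg : ∀ ω, 0 ≤ g ω)
    (hgi : Integrable g μ) (hYm : Measurable Y) (hY : ∀ ω, 0 ≤ Y ω) {C α β γ : ℝ}
    (hC : 0 ≤ C) (hα : 0 < α) (hγ : 0 < γ) (hβ0 : 0 ≤ β) (hβ : β ≤ α / 2)
    (htail : ∀ s, 0 ≤ s →
      ∫ ω in {ω | s ≤ Y ω}, g ω ∂μ ≤ C * exp (-α * s ^ γ) * ∫ ω, g ω ∂μ) :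
    Integrable (fun ω => g ω * exp (β * Y ω ^ γ)) μ ∧
      ∫ ω, g ω * exp (β * Y ω ^ γ) ∂μ ≤ (1 + β * tailConstant C α γ) * ∫ ω, g ω ∂μ := by
  set ν := μ.withDensity fun ω => ENNReal.ofReal (g ω)
  have hν : ∀ A, MeasurableSet A → ν A = ENNReal.ofReal (∫ ω in A, g ω ∂μ) := fun A hA => by
    rw [withDensity_apply _ hA, ofReal_integral_eq_lintegral_ofReal hgi.restrict (ae_of_all _ hg)]
  have hν_tail : ∀ s, 0 < s →
      ν {ω | s ≤ Y ω} ≤ ENNReal.ofReal (C * exp (-α * s ^ γ)) * ν univ := fun s hs => by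
    rw [hν _ (measurableSet_le measurable_const hYm), hν _ MeasurableSet.univ, setIntegral_univ,
      ← ENNReal.ofReal_mul (mul_nonneg hC (exp_nonneg _))]
    exact ENNReal.ofReal_le_ofReal (htail s hs.le)
  have hbound : ∫⁻ ω, ENNReal.ofReal (g ω * exp (β * Y ω ^ γ)) ∂μ
      ≤ ENNReal.ofReal ((1 + β * tailConstant C α γ) * ∫ ω, g ω ∂μ) :=
    calc ∫⁻ ω, ENNReal.ofReal (g ω * exp (β * Y ω ^ γ)) ∂μ
        = ∫⁻ ω, ENNReal.ofReal (exp (β * Y ω ^ γ)) ∂ν := by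
          rw [lintegral_withDensity_eq_lintegral_mul _ hgm.ennreal_ofReal (by fun_prop)]
          simp_rw [Pi.mul_apply, ENNReal.ofReal_mul (hg _)]
      _ ≤ ENNReal.ofReal (1 + β * tailConstant C α γ) * ν univ :=
          lintegral_exp_mul_rpow_le hYm hY hC hα hγ hβ0 hβ hν_tail
      _ = ENNReal.ofReal ((1 + β * tailConstant C α γ) * ∫ ω, g ω ∂μ) := by
          rw [hν _ MeasurableSet.univ, setIntegral_univ,
            ENNReal.ofReal_mul (one_add_mul_tailConstant_nonneg hC hγ.le hβ0)]
  have hnn : 0 ≤ᵐ[μ] fun ω => g ω * exp (β * Y ω ^ γ) :=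
    ae_of_all _ fun ω => mul_nonneg (hg ω) (exp_nonneg _)
  have hmeas : AEStronglyMeasurable (fun ω => g ω * exp (β * Y ω ^ γ)) μ := by
    fun_prop
  refine ⟨⟨hmeas, (hasFiniteIntegral_iff_ofReal hnn).2 (hbound.trans_lt ENNReal.ofReal_lt_top)⟩, ?_⟩
  rw [integral_eq_lintegral_of_nonneg_ae hnn hmeas]
  exact ENNReal.toReal_le_of_le_ofReal
    (mul_nonneg (one_add_mul_tailConstant_nonneg hC hγ.le hβ0) (integral_nonneg hg)) hbound

/-- `ℙ(X j ≥ t ∣ X i, i < j) ≤ C e^(-α t^γ)`, tested against nonnegative integrable functions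
of the earlier variables. -/
def HasConditionalTailBound {Ω : Type*} [MeasurableSpace Ω] (μ : Measure Ω) {k : ℕ}
    (X : Fin k → Ω → ℝ) (C α γ : ℝ) : Prop :=
  ∀ (j : Fin k) (t : ℝ), 0 ≤ t →
    ∀ g : Ω → ℝ, Measurable g → (∀ ω, 0 ≤ g ω) → Integrable g μ →
      (∀ ω ω' : Ω, (∀ i : Fin k, i < j → X i ω = X i ω') → g ω = g ω') →
      ∫ ω in {ω | t ≤ X j ω}, g ω ∂μ ≤ C * exp (-α * t ^ γ) * ∫ ω, g ω ∂μ

namespace HasConditionalTailBound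

variable {Ω : Type*} [MeasurableSpace Ω] {μ : Measure Ω} {k : ℕ} {C α γ : ℝ}

lemma castSucc {X : Fin (k + 1) → Ω → ℝ} (hX : HasConditionalTailBound μ X C α γ) :
    HasConditionalTailBound μ (fun i ω => X i.castSucc ω) C α γ :=
  fun j t ht g hgm hg hgi hdep => hX j.castSucc t ht g hgm hg hgi fun ω ω' h =>
    hdep ω ω' fun i hi => h i.castSucc (Fin.castSucc_lt_castSucc_iff.2 hi)

lemma last {X : Fin (k + 1) → Ω → ℝ} (hX : HasConditionalTailBound μ X C α γ)
    {g : Ω → ℝ} (hgm : Measurable g) (hg : ∀ ω, 0 ≤ g ω) (hgi : Integrable g μ)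
    (hdep : ∀ ω ω' : Ω, (∀ i : Fin k, X i.castSucc ω = X i.castSucc ω') → g ω = g ω')
    {t : ℝ} (ht : 0 ≤ t) :
    ∫ ω in {ω | t ≤ X (Fin.last k) ω}, g ω ∂μ ≤ C * exp (-α * t ^ γ) * ∫ ω, g ω ∂μ :=
  hX (Fin.last k) t ht g hgm hg hgi fun ω ω' h =>
    hdep ω ω' fun i => h i.castSucc (Fin.castSucc_lt_last i)

end HasConditionalTailBound

theorem integrable_exp_mul_sum_rpow_and_integral_le {Ω : Type*} [MeasurableSpace Ω]
    {μ : Measure Ω} [IsFiniteMeasure μ] {C α β γ : ℝ} (hC : 0 ≤ C) (hα : 0 < α) (hγ : 0 < γ)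
    (hβ0 : 0 ≤ β) (hβ : β ≤ α / 2) :
    ∀ {k : ℕ} (X : Fin k → Ω → ℝ), (∀ j, Measurable (X j)) → (∀ j ω, 0 ≤ X j ω) →
      HasConditionalTailBound μ X C α γ →
      Integrable (fun ω => exp (β * ∑ j, X j ω ^ γ)) μ ∧
        ∫ ω, exp (β * ∑ j, X j ω ^ γ) ∂μ ≤ (1 + β * tailConstant C α γ) ^ k * μ.real univ
  | 0, X, _, _, _ => by simp
  | k + 1, X, hXm, hXnn, hX => by
    obtain ⟨hint, hle⟩ := integrable_exp_mul_sum_rpow_and_integral_le hC hα hγ hβ0 hβ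
      (fun i ω => X i.castSucc ω) (fun _ => hXm _) (fun _ => hXnn _) hX.castSucc
    have hsplit : ∀ ω, exp (β * ∑ j, X j ω ^ γ)
        = exp (β * ∑ i : Fin k, X i.castSucc ω ^ γ) * exp (β * X (Fin.last k) ω ^ γ) :=
      fun ω => by rw [Fin.sum_univ_castSucc, mul_add, exp_add]
    simp_rw [hsplit]
    obtain ⟨hint', hle'⟩ := integrable_mul_exp_mul_rpow_and_integral_le (by fun_prop)
      (fun ω => exp_nonneg _) hint (hXm _) (hXnn _) hC hα hγ hβ0 hβ
      (fun t ht => hX.last (by fun_prop) (fun ω => exp_nonneg _) hint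
        (fun ω ω' h => by simp only [h]) ht)
    refine ⟨hint', hle'.trans ?_⟩
    rw [pow_succ', mul_assoc]
    exact mul_le_mul_of_nonneg_left hle (one_add_mul_tailConstant_nonneg hC hγ.le hβ0)

/-- Proposition 4.11: if `X₁, …, X_k` are nonnegative random variables whose
conditional tails given the previous variables satisfy
`ℙ(X_j ≥ t ∣ X₁, …, X_{j-1}) ≤ C e^{-α t^γ}`, then for `β ∈ (0, α/2]`,
`ℙ(X₁ + ⋯ + X_k ≥ t) ≤ (1 + β C₁)^k e^{-β t^γ}` with
`C₁ = C γ ∫₀^∞ s^{γ-1} e^{-α s^γ/2} ds`. The conditional bound is expressed by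
testing against nonnegative functions of the earlier variables. -/
theorem sum_stretched_exponential_tail {Ω : Type*} [MeasurableSpace Ω]
    (μ : Measure Ω) [IsProbabilityMeasure μ]
    (k : ℕ) (X : Fin k → Ω → ℝ)
    (hXm : ∀ j, Measurable (X j)) (hXnn : ∀ j ω, 0 ≤ X j ω)
    (C α γ : ℝ) (hC : 0 ≤ C) (hα : 0 < α) (hγ : γ ∈ Set.Ioc (0:ℝ) 1)
    (hcond : ∀ (j : Fin k) (t : ℝ), 0 ≤ t →
      ∀ g : Ω → ℝ, Measurable g → (∀ ω, 0 ≤ g ω) → Integrable g μ →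
        (∀ ω ω' : Ω, (∀ i : Fin k, i < j → X i ω = X i ω') → g ω = g ω') →
        ∫ ω in {ω | t ≤ X j ω}, g ω ∂μ
          ≤ C * Real.exp (-α * t ^ γ) * ∫ ω, g ω ∂μ)
    (β : ℝ) (hβ : β ∈ Set.Ioc 0 (α / 2)) (t : ℝ) (ht : 0 ≤ t) :
    (μ {ω | t ≤ ∑ j, X j ω}).toReal
      ≤ (1 + β * (C * γ * ∫ s in Set.Ioi (0:ℝ), s ^ (γ - 1) * Real.exp (-α * s ^ γ / 2))) ^ k
          * Real.exp (-β * t ^ γ) := by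
  obtain ⟨hγ0, hγ1⟩ := hγ
  obtain ⟨hβ0, hβ⟩ := hβ
  obtain ⟨hint, hle⟩ := integrable_exp_mul_sum_rpow_and_integral_le hC hα hγ0 hβ0.le hβ
    X hXm hXnn hcond
  have hsub : {ω | t ≤ ∑ j, X j ω} ⊆ {ω | exp (β * t ^ γ) ≤ exp (β * ∑ j, X j ω ^ γ)} :=
    fun ω (hω : t ≤ _) => exp_le_exp.2 <| mul_le_mul_of_nonneg_left
      ((rpow_le_rpow ht hω hγ0.le).trans
        (rpow_sum_le_sum_rpow _ (fun j _ => hXnn j ω) hγ0 hγ1)) hβ0.le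
  have hmarkov := mul_meas_ge_le_integral_of_nonneg
    (ae_of_all _ fun ω => (exp_pos _).le) hint (exp (β * t ^ γ))
  rw [probReal_univ, mul_one] at hle
  rw [← measureReal_def, neg_mul, exp_neg, ← div_eq_mul_inv, le_div_iff₀' (exp_pos _)]
  exact (mul_le_mul_of_nonneg_left (measureReal_mono hsub) (exp_pos _).le).trans
    (hmarkov.trans hle)
end
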